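/- arXiv:0808.0297 — 18 statements merged into one kernel-verified Lean document; each statement's English description precedes it below -/
import Mathlib

section
/- Let l, k > 0 and let v ∈ (0, k). Then the set E_v = {(x,y) ∈ ℝ² : k²x² + l²y² − 2l(k−2v)xy − 2lkv·x − 2l²v·y + l²v² = 0} is an ellipse (i.e. the image of the unit circle {p ∈ ℝ² : p.1² + p.2² = 1} under an invertible affine map of ℝ²), E_v is contained in the solid rectangle [0,l] × [0,k], and E_v meets each of the four sides of the rectangle in exactly one point, namely: the bottom side [(0,0),(l,0)] in (lv/k, 0), the left side [(0,0),(0,k)] in (0, v), the top side [(0,k),(l,k)] in ((l/k)(k−v), k), and the right side [(l,0),(l,k)] in (l, k−v). -/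
/-!
On each side line of the rectangle the equation restricts to a perfect square, so `E_v` touches
each side exactly once. As a quadratic in `y` its reduced discriminant is `4 l² v (k - v) x (l - x)`,
so real points have `0 ≤ x ≤ l`; as a quadratic in `x`, likewise `0 ≤ y ≤ k`. Completing the same
square gives the parametrization `x = l (1 + q₁) / 2`, `y = k / 2 + (k - 2v) q₁ / 2 + √(v (k - v)) q₂`,
which turns the equation into `l² v (k - v) (q₁² + q₂² - 1) = 0`.
-/

/-- The unit circle in `ℝ × ℝ`. -/
def unitCircle : Set (ℝ × ℝ) := {p : ℝ × ℝ | p.1 ^ 2 + p.2 ^ 2 = 1}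

/-- A set is an ellipse if it is the image of the unit circle under an
invertible affine map of the plane. -/
def IsEllipse (E : Set (ℝ × ℝ)) : Prop :=
  ∃ f : (ℝ × ℝ) ≃ᵃ[ℝ] (ℝ × ℝ), E = (f : (ℝ × ℝ) → (ℝ × ℝ)) '' unitCircle

open Set

theorem isEllipse_of_comp_affineEquiv {Q : ℝ × ℝ → ℝ} (f : (ℝ × ℝ) ≃ᵃ[ℝ] (ℝ × ℝ)) {c : ℝ}
    (hc : c ≠ 0) (hQ : ∀ q, Q (f q) = c * (q.1 ^ 2 + q.2 ^ 2 - 1)) :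
    IsEllipse {p | Q p = 0} := by
  refine ⟨f, ext fun p => ⟨fun hp => ⟨f.symm p, ?_, f.apply_symm_apply p⟩, ?_⟩⟩
  · have h := hQ (f.symm p)
    rw [f.apply_symm_apply, show Q p = 0 from hp, eq_comm, mul_eq_zero, sub_eq_zero] at h
    exact h.resolve_left hc
  · rintro ⟨q, hq, rfl⟩
    show Q (f q) = 0
    rw [hQ, show q.1 ^ 2 + q.2 ^ 2 = 1 from hq, sub_self, mul_zero]

noncomputable def lowerTriangularAffineEquiv (a b d : ℝ) (ha : a ≠ 0) (hd : d ≠ 0) (c : ℝ × ℝ) :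
    (ℝ × ℝ) ≃ᵃ[ℝ] (ℝ × ℝ) :=
  ((LinearEquiv.smulOfNeZero ℝ ℝ a ha).skewProd (LinearEquiv.smulOfNeZero ℝ ℝ d hd)
    (b • LinearMap.id)).toAffineEquiv.trans (AffineEquiv.constVAdd ℝ (ℝ × ℝ) c)

theorem lowerTriangularAffineEquiv_apply (a b d : ℝ) (ha : a ≠ 0) (hd : d ≠ 0) (c q : ℝ × ℝ) :
    lowerTriangularAffineEquiv a b d ha hd c q = (c.1 + a * q.1, c.2 + (d * q.2 + b * q.1)) := by
  simp [lowerTriangularAffineEquiv, LinearEquiv.skewProd_apply]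
  rfl

theorem mem_segment_horizontal {a b c : ℝ} (hab : a ≤ b) {p : ℝ × ℝ} :
    p ∈ segment ℝ (a, c) (b, c) ↔ p.1 ∈ Icc a b ∧ p.2 = c := by
  rw [← Prod.image_mk_segment_left, segment_eq_Icc hab]
  exact ⟨by rintro ⟨x, hx, rfl⟩; exact ⟨hx, rfl⟩, fun h => ⟨p.1, h.1, Prod.ext rfl h.2.symm⟩⟩

theorem mem_segment_vertical {a b c : ℝ} (hab : a ≤ b) {p : ℝ × ℝ} :
    p ∈ segment ℝ (c, a) (c, b) ↔ p.1 = c ∧ p.2 ∈ Icc a b := by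
  rw [← Prod.image_mk_segment_right, segment_eq_Icc hab]
  exact ⟨by rintro ⟨y, hy, rfl⟩; exact ⟨rfl, hy⟩, fun h => ⟨p.2, h.2, Prod.ext h.1.symm rfl⟩⟩

theorem inter_segment_horizontal_eq_singleton {E : Set (ℝ × ℝ)} {a b c x₀ : ℝ} (hab : a ≤ b)
    (hx₀ : x₀ ∈ Icc a b) (hE : ∀ x, (x, c) ∈ E ↔ x = x₀) :
    E ∩ segment ℝ (a, c) (b, c) = {(x₀, c)} := by
  refine eq_singleton_iff_unique_mem.2 ⟨⟨(hE x₀).2 rfl, (mem_segment_horizontal hab).2 ⟨hx₀, rfl⟩⟩, ?_⟩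
  rintro ⟨x, y⟩ ⟨hp, hseg⟩
  obtain ⟨-, rfl⟩ := (mem_segment_horizontal hab).1 hseg
  rw [(hE x).1 hp]

theorem inter_segment_vertical_eq_singleton {E : Set (ℝ × ℝ)} {a b c y₀ : ℝ} (hab : a ≤ b)
    (hy₀ : y₀ ∈ Icc a b) (hE : ∀ y, (c, y) ∈ E ↔ y = y₀) :
    E ∩ segment ℝ (c, a) (c, b) = {(c, y₀)} := by
  refine eq_singleton_iff_unique_mem.2 ⟨⟨(hE y₀).2 rfl, (mem_segment_vertical hab).2 ⟨rfl, hy₀⟩⟩, ?_⟩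
  rintro ⟨x, y⟩ ⟨hp, hseg⟩
  obtain ⟨rfl, -⟩ := (mem_segment_vertical hab).1 hseg
  rw [(hE y).1 hp]

theorem mem_Icc_of_mul_sub_nonneg {x l : ℝ} (hl : 0 ≤ l) (h : 0 ≤ x * (l - x)) : x ∈ Icc 0 l :=
  ⟨by nlinarith, by nlinarith⟩

def inscribedConic (l k v x y : ℝ) : ℝ :=
  k ^ 2 * x ^ 2 + l ^ 2 * y ^ 2 - 2 * l * (k - 2 * v) * x * y
    - 2 * l * k * v * x - 2 * l ^ 2 * v * y + l ^ 2 * v ^ 2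

def inscribedEllipse (l k v : ℝ) : Set (ℝ × ℝ) := {p | inscribedConic l k v p.1 p.2 = 0}

section

variable {l k v : ℝ}

theorem mem_inscribedEllipse {p : ℝ × ℝ} :
    p ∈ inscribedEllipse l k v ↔ inscribedConic l k v p.1 p.2 = 0 :=
  Iff.rfl

theorem inscribedConic_bottom (x : ℝ) : inscribedConic l k v x 0 = (k * x - l * v) ^ 2 := by
  unfold inscribedConic; ring

theorem inscribedConic_left (y : ℝ) : inscribedConic l k v 0 y = (l * (y - v)) ^ 2 := by
  unfold inscribedConic; ring

theorem inscribedConic_top (x : ℝ) : inscribedConic l k v x k = (k * x - l * (k - v)) ^ 2 := by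
  unfold inscribedConic; ring

theorem inscribedConic_right (y : ℝ) : inscribedConic l k v l y = (l * (y - (k - v))) ^ 2 := by
  unfold inscribedConic; ring

theorem mul_sub_nonneg_fst_of_inscribedConic_eq_zero {x y : ℝ} (hl : l ≠ 0)
    (hv : 0 < v * (k - v)) (h : inscribedConic l k v x y = 0) : 0 ≤ x * (l - x) := by
  have hdisc : 4 * l ^ 2 * (v * (k - v)) * (x * (l - x))
      = (l ^ 2 * y - l * ((k - 2 * v) * x + l * v)) ^ 2 := by
    unfold inscribedConic at h; linear_combination (-l ^ 2) * h
  exact nonneg_of_mul_nonneg_right (hdisc ▸ sq_nonneg _) (by positivity)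

theorem mul_sub_nonneg_snd_of_inscribedConic_eq_zero {x y : ℝ} (hl : l ≠ 0)
    (hv : 0 < v * (k - v)) (h : inscribedConic l k v x y = 0) : 0 ≤ y * (k - y) := by
  have hdisc : 4 * l ^ 2 * (v * (k - v)) * (y * (k - y))
      = (k ^ 2 * x - l * ((k - 2 * v) * y + k * v)) ^ 2 := by
    unfold inscribedConic at h; linear_combination (-k ^ 2) * h
  exact nonneg_of_mul_nonneg_right (hdisc ▸ sq_nonneg _) (by positivity)

theorem inscribedConic_param (q₁ q₂ s : ℝ) (hs : s ^ 2 = v * (k - v)) :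
    inscribedConic l k v (l / 2 + l / 2 * q₁) (k / 2 + (s * q₂ + (k - 2 * v) / 2 * q₁))
      = l ^ 2 * (v * (k - v)) * (q₁ ^ 2 + q₂ ^ 2 - 1) := by
  unfold inscribedConic; linear_combination (l ^ 2 * q₂ ^ 2) * hs

theorem inscribedEllipse_subset_rectangle (hl : 0 < l) (hv : 0 < v) (hvk : v < k) :
    inscribedEllipse l k v ⊆ Icc 0 l ×ˢ Icc 0 k := by
  have hvk' : 0 < v * (k - v) := mul_pos hv (by linarith)
  intro p hp
  exact ⟨mem_Icc_of_mul_sub_nonneg hl.le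
      (mul_sub_nonneg_fst_of_inscribedConic_eq_zero hl.ne' hvk' hp),
    mem_Icc_of_mul_sub_nonneg (by linarith)
      (mul_sub_nonneg_snd_of_inscribedConic_eq_zero hl.ne' hvk' hp)⟩

theorem isEllipse_inscribedEllipse (hl : l ≠ 0) (hv : 0 < v) (hvk : v < k) :
    IsEllipse (inscribedEllipse l k v) := by
  have hvk' : 0 < v * (k - v) := mul_pos hv (by linarith)
  have hs : 0 < √(v * (k - v)) := Real.sqrt_pos.2 hvk'
  refine isEllipse_of_comp_affineEquiv
    (lowerTriangularAffineEquiv (l / 2) ((k - 2 * v) / 2) √(v * (k - v)) (by positivity)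
      hs.ne' (l / 2, k / 2)) (c := l ^ 2 * (v * (k - v))) (by positivity) fun q => ?_
  rw [lowerTriangularAffineEquiv_apply]
  exact inscribedConic_param q.1 q.2 _ (Real.sq_sqrt hvk'.le)

theorem inscribedEllipse_inter_bottom (hl : 0 < l) (hv : 0 < v) (hvk : v < k) :
    inscribedEllipse l k v ∩ segment ℝ (0, 0) (l, 0) = {(l * v / k, 0)} := by
  have hE (x : ℝ) : (x, 0) ∈ inscribedEllipse l k v ↔ x = l * v / k := by
    rw [mem_inscribedEllipse, inscribedConic_bottom, sq_eq_zero_iff, sub_eq_zero,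
      eq_div_iff (by linarith), mul_comm]
  exact inter_segment_horizontal_eq_singleton hl.le
    (inscribedEllipse_subset_rectangle hl hv hvk ((hE _).2 rfl)).1 hE

theorem inscribedEllipse_inter_left (hl : 0 < l) (hv : 0 < v) (hvk : v < k) :
    inscribedEllipse l k v ∩ segment ℝ (0, 0) (0, k) = {(0, v)} := by
  have hE (y : ℝ) : (0, y) ∈ inscribedEllipse l k v ↔ y = v := by
    rw [mem_inscribedEllipse, inscribedConic_left, sq_eq_zero_iff, mul_eq_zero,
      or_iff_right hl.ne', sub_eq_zero]
  exact inter_segment_vertical_eq_singleton (by linarith)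
    (inscribedEllipse_subset_rectangle hl hv hvk ((hE _).2 rfl)).2 hE

theorem inscribedEllipse_inter_top (hl : 0 < l) (hv : 0 < v) (hvk : v < k) :
    inscribedEllipse l k v ∩ segment ℝ (0, k) (l, k) = {(l / k * (k - v), k)} := by
  have hE (x : ℝ) : (x, k) ∈ inscribedEllipse l k v ↔ x = l / k * (k - v) := by
    rw [mem_inscribedEllipse, inscribedConic_top, sq_eq_zero_iff, sub_eq_zero,
      div_mul_eq_mul_div, eq_div_iff (by linarith), mul_comm]
  exact inter_segment_horizontal_eq_singleton hl.le
    (inscribedEllipse_subset_rectangle hl hv hvk ((hE _).2 rfl)).1 hE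

theorem inscribedEllipse_inter_right (hl : 0 < l) (hv : 0 < v) (hvk : v < k) :
    inscribedEllipse l k v ∩ segment ℝ (l, 0) (l, k) = {(l, k - v)} := by
  have hE (y : ℝ) : (l, y) ∈ inscribedEllipse l k v ↔ y = k - v := by
    rw [mem_inscribedEllipse, inscribedConic_right, sq_eq_zero_iff, mul_eq_zero,
      or_iff_right hl.ne', sub_eq_zero]
  exact inter_segment_vertical_eq_singleton (by linarith)
    (inscribedEllipse_subset_rectangle hl hv hvk ((hE _).2 rfl)).2 hE

end

theorem stmt_0_general (l k v : ℝ) (hl : 0 < l) (hv : v ∈ Set.Ioo (0 : ℝ) k)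
    (E : Set (ℝ × ℝ))
    (hE : E = {p : ℝ × ℝ |
      k ^ 2 * p.1 ^ 2 + l ^ 2 * p.2 ^ 2 - 2 * l * (k - 2 * v) * p.1 * p.2
        - 2 * l * k * v * p.1 - 2 * l ^ 2 * v * p.2 + l ^ 2 * v ^ 2 = 0}) :
    IsEllipse E ∧
    E ⊆ Set.Icc (0 : ℝ) l ×ˢ Set.Icc (0 : ℝ) k ∧
    E ∩ segment ℝ (0, 0) (l, 0) = {(l * v / k, 0)} ∧
    E ∩ segment ℝ (0, 0) (0, k) = {(0, v)} ∧
    E ∩ segment ℝ (0, k) (l, k) = {(l / k * (k - v), k)} ∧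
    E ∩ segment ℝ (l, 0) (l, k) = {(l, k - v)} := by
  obtain ⟨hv, hvk⟩ := hv
  obtain rfl : E = inscribedEllipse l k v := hE
  exact ⟨isEllipse_inscribedEllipse hl.ne' hv hvk, inscribedEllipse_subset_rectangle hl hv hvk,
    inscribedEllipse_inter_bottom hl hv hvk, inscribedEllipse_inter_left hl hv hvk,
    inscribedEllipse_inter_top hl hv hvk, inscribedEllipse_inter_right hl hv hvk⟩

theorem stmt_0 (l k v : ℝ) (hl : 0 < l) (hk : 0 < k) (hv : v ∈ Set.Ioo (0 : ℝ) k)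
    (E : Set (ℝ × ℝ))
    (hE : E = {p : ℝ × ℝ |
      k ^ 2 * p.1 ^ 2 + l ^ 2 * p.2 ^ 2 - 2 * l * (k - 2 * v) * p.1 * p.2
        - 2 * l * k * v * p.1 - 2 * l ^ 2 * v * p.2 + l ^ 2 * v ^ 2 = 0}) :
    IsEllipse E ∧
    E ⊆ Set.Icc (0 : ℝ) l ×ˢ Set.Icc (0 : ℝ) k ∧
    E ∩ segment ℝ (0, 0) (l, 0) = {(l * v / k, 0)} ∧
    E ∩ segment ℝ (0, 0) (0, k) = {(0, v)} ∧
    E ∩ segment ℝ (0, k) (l, k) = {(l / k * (k - v), k)} ∧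
    E ∩ segment ℝ (l, 0) (l, k) = {(l, k - v)} :=
  stmt_0_general l k v hl hv E hE
end

section
/- Let l, k > 0 and let E be an ellipse (the image of the unit circle under an invertible affine map of ℝ²) such that E is contained in the solid rectangle [0,l] × [0,k] and E has nonempty intersection with each of the four sides of the rectangle. Then there exists v ∈ (0, k) such that E = {(x,y) ∈ ℝ² : k²x² + l²y² − 2l(k−2v)xy − 2lkv·x − 2l²v·y + l²v² = 0}. -/
lemma AffineMap.exists_coord_eq (f : (ℝ × ℝ) →ᵃ[ℝ] (ℝ × ℝ)) :
    ∃ a b c₁ d e c₂ : ℝ, ∀ u : ℝ × ℝ,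
      f u = (c₁ + (a * u.1 + b * u.2), c₂ + (d * u.1 + e * u.2)) := by
  refine ⟨(f.linear (1, 0)).1, (f.linear (0, 1)).1, (f 0).1,
    (f.linear (1, 0)).2, (f.linear (0, 1)).2, (f 0).2, fun u => ?_⟩
  have hu : u = (u.1 • ((1 : ℝ), (0 : ℝ)) + u.2 • ((0 : ℝ), (1 : ℝ))) +ᵥ (0 : ℝ × ℝ) := by
    ext <;> simp
  rw [hu, f.map_vadd, map_add, map_smul, map_smul]
  ext <;> simp <;> ring

lemma mul_sub_mul_ne_zero_of_injective {a b c₁ d e c₂ : ℝ}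
    (hf : Function.Injective fun u : ℝ × ℝ =>
      (c₁ + (a * u.1 + b * u.2), c₂ + (d * u.1 + e * u.2))) :
    a * e - b * d ≠ 0 := by
  intro hdet
  have hker : ∀ u : ℝ × ℝ, a * u.1 + b * u.2 = 0 → d * u.1 + e * u.2 = 0 → u = 0 := by
    intro u h₁ h₂
    exact hf (by simp [h₁, h₂])
  have hed := hker (e, -d) (by linear_combination hdet) (by ring)
  have hba := hker (b, -a) (by ring) (by linear_combination -hdet)
  simp only [Prod.mk_eq_zero, neg_eq_zero] at hed hba
  have := hker (1, 0) (by simp [hba.2]) (by simp [hed.2])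
  simp at this

lemma abs_mul_add_mul_le_sqrt (a b : ℝ) {u : ℝ × ℝ} (hu : u ∈ unitCircle) :
    |a * u.1 + b * u.2| ≤ √(a ^ 2 + b ^ 2) :=
  Real.abs_le_sqrt <| by
    have hu : u.1 ^ 2 + u.2 ^ 2 = 1 := hu
    nlinarith [sq_nonneg (a * u.2 - b * u.1)]

lemma exists_mem_unitCircle_mul_add_mul_eq_sqrt (a b : ℝ) :
    ∃ u ∈ unitCircle, a * u.1 + b * u.2 = √(a ^ 2 + b ^ 2) := by
  set r := √(a ^ 2 + b ^ 2)
  have hr : r ^ 2 = a ^ 2 + b ^ 2 := Real.sq_sqrt (by positivity)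
  rcases eq_or_ne r 0 with h | h
  · refine ⟨(1, 0), by simp [unitCircle], ?_⟩
    have ha : a = 0 := by nlinarith
    simp [ha, h]
  · refine ⟨(a / r, b / r), ?_, ?_⟩
    · simp only [unitCircle, Set.mem_ofPred_eq]
      field_simp
      linear_combination -hr
    · field_simp
      linear_combination -hr

lemma center_eq_and_sq_add_sq_eq {l a b c : ℝ}
    (hbd : ∀ u ∈ unitCircle, c + (a * u.1 + b * u.2) ∈ Set.Icc 0 l)
    (h₀ : ∃ u ∈ unitCircle, c + (a * u.1 + b * u.2) = 0)
    (hl : ∃ u ∈ unitCircle, c + (a * u.1 + b * u.2) = l) :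
    c = l / 2 ∧ a ^ 2 + b ^ 2 = l ^ 2 / 4 := by
  set r := √(a ^ 2 + b ^ 2)
  have hr : r ^ 2 = a ^ 2 + b ^ 2 := Real.sq_sqrt (by positivity)
  obtain ⟨p, hp, hp₀⟩ := h₀
  obtain ⟨q, hq, hql⟩ := hl
  obtain ⟨w, hw, hwr⟩ := exists_mem_unitCircle_mul_add_mul_eq_sqrt a b
  have hw' : -w ∈ unitCircle := by simpa [unitCircle] using hw
  have hmax := (hbd w hw).2
  have hmin := (hbd (-w) hw').1
  have hp_le := abs_le.mp (abs_mul_add_mul_le_sqrt a b hp)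
  have hq_le := abs_le.mp (abs_mul_add_mul_le_sqrt a b hq)
  simp only [Prod.fst_neg, Prod.snd_neg] at hmin
  have hrl : r = l / 2 := by linarith
  exact ⟨by linarith, by rw [← hr, hrl]; ring⟩

lemma exists_mem_inter_segment_fst_eq {S : Set (ℝ × ℝ)} {x y y' : ℝ}
    (h : (S ∩ segment ℝ (x, y) (x, y')).Nonempty) : ∃ p ∈ S, p.1 = x := by
  obtain ⟨p, hpS, hp⟩ := h
  exact ⟨p, hpS, by simpa using (Prod.segment_subset _ _ hp).1⟩

lemma exists_mem_inter_segment_snd_eq {S : Set (ℝ × ℝ)} {x x' y : ℝ}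
    (h : (S ∩ segment ℝ (x, y) (x', y)).Nonempty) : ∃ p ∈ S, p.2 = y := by
  obtain ⟨p, hpS, hp⟩ := h
  exact ⟨p, hpS, by simpa using (Prod.segment_subset _ _ hp).2⟩

lemma Equiv.image_unitCircle_eq_setOf (f : ℝ × ℝ ≃ ℝ × ℝ) (Q : ℝ × ℝ → ℝ) {C : ℝ} (hC : C ≠ 0)
    (hQ : ∀ u, Q (f u) = C * (u.1 ^ 2 + u.2 ^ 2 - 1)) :
    f '' unitCircle = {q | Q q = 0} := by
  ext q
  rw [f.image_eq_preimage_symm, Set.mem_preimage, Set.mem_ofPred_eq, ← f.apply_symm_apply q, hQ,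
    f.symm_apply_apply, mul_eq_zero, or_iff_right hC, sub_eq_zero]
  rfl

def rectangleConic (l k v : ℝ) (p : ℝ × ℝ) : ℝ :=
  k ^ 2 * p.1 ^ 2 + l ^ 2 * p.2 ^ 2 - 2 * l * (k - 2 * v) * p.1 * p.2
    - 2 * l * k * v * p.1 - 2 * l ^ 2 * v * p.2 + l ^ 2 * v ^ 2

lemma rectangleConic_apply {l k a b d e v : ℝ} (hab : a ^ 2 + b ^ 2 = l ^ 2 / 4)
    (hde : d ^ 2 + e ^ 2 = k ^ 2 / 4) (hv : l * v = l * k / 2 - 2 * (a * d + b * e))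
    (u : ℝ × ℝ) :
    rectangleConic l k v (l / 2 + (a * u.1 + b * u.2), k / 2 + (d * u.1 + e * u.2)) =
      4 * (a * e - b * d) ^ 2 * (u.1 ^ 2 + u.2 ^ 2 - 1) := by
  set x := a * u.1 + b * u.2
  set y := d * u.1 + e * u.2
  unfold rectangleConic
  linear_combination (4 * (l / 2 + x) * (k / 2 + y) - 2 * k * (l / 2 + x) - 2 * l * (k / 2 + y)
      + l * v + l * k / 2 - 2 * (a * d + b * e)) * hv
    + (4 * (a ^ 2 + b ^ 2) - 4 * x ^ 2) * hde + (k ^ 2 - 4 * y ^ 2) * hab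

lemma mem_Ioo_of_sq_add_sq_eq {l k a b d e v : ℝ} (hl : 0 < l) (hk : 0 < k)
    (hab : a ^ 2 + b ^ 2 = l ^ 2 / 4) (hde : d ^ 2 + e ^ 2 = k ^ 2 / 4)
    (hdet : a * e - b * d ≠ 0) (hv : l * v = l * k / 2 - 2 * (a * d + b * e)) :
    v ∈ Set.Ioo 0 k := by
  have hlagrange : (a * d + b * e) ^ 2 + (a * e - b * d) ^ 2 = (l * k / 4) ^ 2 := by
    linear_combination (d ^ 2 + e ^ 2) * hab + l ^ 2 / 4 * hde
  have hm : |a * d + b * e| < l * k / 4 :=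
    abs_lt_of_sq_lt_sq (by nlinarith [pow_pos (abs_pos.mpr hdet) 2, sq_abs (a * e - b * d)])
      (by positivity)
  obtain ⟨hm₁, hm₂⟩ := abs_lt.mp hm
  constructor <;> nlinarith

theorem stmt_1 (l k : ℝ) (hl : 0 < l) (hk : 0 < k) (E : Set (ℝ × ℝ))
    (hE : IsEllipse E)
    (hsub : E ⊆ Set.Icc (0 : ℝ) l ×ˢ Set.Icc (0 : ℝ) k)
    (h1 : (E ∩ segment ℝ ((0 : ℝ), (0 : ℝ)) (l, 0)).Nonempty)
    (h2 : (E ∩ segment ℝ ((0 : ℝ), (0 : ℝ)) (0, k)).Nonempty)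
    (h3 : (E ∩ segment ℝ ((0 : ℝ), k) (l, k)).Nonempty)
    (h4 : (E ∩ segment ℝ (l, (0 : ℝ)) (l, k)).Nonempty) :
    ∃ v ∈ Set.Ioo (0 : ℝ) k, E = {p : ℝ × ℝ |
      k ^ 2 * p.1 ^ 2 + l ^ 2 * p.2 ^ 2 - 2 * l * (k - 2 * v) * p.1 * p.2
        - 2 * l * k * v * p.1 - 2 * l ^ 2 * v * p.2 + l ^ 2 * v ^ 2 = 0} := by
  obtain ⟨f, rfl⟩ := hE
  obtain ⟨a, b, c₁, d, e, c₂, hf⟩ := f.toAffineMap.exists_coord_eq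
  simp only [AffineEquiv.coe_toAffineMap] at hf
  have hdet : a * e - b * d ≠ 0 := mul_sub_mul_ne_zero_of_injective (funext hf ▸ f.injective)
  have hbd : ∀ u ∈ unitCircle, f u ∈ Set.Icc 0 l ×ˢ Set.Icc 0 k := fun u hu => hsub ⟨u, hu, rfl⟩
  have hx₀ := exists_mem_inter_segment_fst_eq h2
  have hxl := exists_mem_inter_segment_fst_eq h4
  have hy₀ := exists_mem_inter_segment_snd_eq h1
  have hyk := exists_mem_inter_segment_snd_eq h3
  simp only [Set.exists_mem_image, hf] at hbd hx₀ hxl hy₀ hyk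
  obtain ⟨rfl, hab⟩ := center_eq_and_sq_add_sq_eq (fun u hu => (hbd u hu).1) hx₀ hxl
  obtain ⟨rfl, hde⟩ := center_eq_and_sq_add_sq_eq (fun u hu => (hbd u hu).2) hy₀ hyk
  obtain ⟨v, hv⟩ : ∃ v, l * v = l * k / 2 - 2 * (a * d + b * e) :=
    ⟨_, mul_div_cancel₀ _ hl.ne'⟩
  refine ⟨v, mem_Ioo_of_sq_add_sq_eq hl hk hab hde hdet hv, ?_⟩
  refine f.toEquiv.image_unitCircle_eq_setOf (rectangleConic l k v)
    (C := 4 * (a * e - b * d) ^ 2) (by positivity) fun u => ?_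
  rw [AffineEquiv.coe_toEquiv, hf]
  exact rectangleConic_apply hab hde hv u
end

section
/- Let l, k > 0 and v ∈ (0, k), and let E_v = {(x,y) ∈ ℝ² : k²x² + l²y² − 2l(k−2v)xy − 2lkv·x − 2l²v·y + l²v² = 0}. Set a(v)² = 2l²(k−v)v / (k² + l² − √((k²+l²)² − 16l²(k−v)v)) and b(v)² = 2l²(k−v)v / (k² + l² + √((k²+l²)² − 16l²(k−v)v)). Then there exist a point c ∈ ℝ² and an angle θ ∈ ℝ such that E_v = {c + a·cos t·(cos θ, sin θ) + b·sin t·(−sin θ, cos θ) : t ∈ ℝ}, where a = √(a(v)²) and b = √(b(v)²); that is, a(v) and b(v) are the lengths of the semi-major and semi-minor axes of E_v. -/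
/-!
The equation of `E_v` says that the quadratic form with matrix `[[k², -l(k-2v)], [-l(k-2v), l²]]`,
evaluated at `p - (l/2, k/2)`, equals `l²v(k-v) > 0`.
Rotating by half the polar angle of `(C - A, -2B)` diagonalises a form `A x² + 2B xy + C y²`,
with eigenvalues `(A + C ∓ d) / 2` where `d² = (A - C)² + 4B²`; here `d² = (k²+l²)² - 16l²(k-v)v`.
A level set `μ₁ s² + μ₂ w² = R` with `μ₁, μ₂, R > 0` is the ellipse with semi-axes `√(R/μ₁)`,
`√(R/μ₂)`, which are exactly `a` and `b`.
-/

open Real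

lemma exists_sqrt_mul_cos_sin_eq (x y : ℝ) :
    ∃ φ : ℝ, √(x ^ 2 + y ^ 2) * cos φ = x ∧ √(x ^ 2 + y ^ 2) * sin φ = y := by
  have hnorm : ‖(⟨x, y⟩ : ℂ)‖ = √(x ^ 2 + y ^ 2) := by
    rw [Complex.norm_def, Complex.normSq_mk, sq, sq]
  exact ⟨Complex.arg ⟨x, y⟩, by rw [← hnorm, Complex.norm_mul_cos_arg],
    by rw [← hnorm, Complex.norm_mul_sin_arg]⟩

lemma exists_eq_mul_cos_and_eq_mul_sin_iff {a b : ℝ} (ha : a ≠ 0) (hb : b ≠ 0) (s w : ℝ) :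
    (∃ t : ℝ, s = a * cos t ∧ w = b * sin t) ↔ (s / a) ^ 2 + (w / b) ^ 2 = 1 := by
  constructor
  · rintro ⟨t, rfl, rfl⟩
    field_simp
    exact cos_sq_add_sin_sq t
  · intro h
    obtain ⟨t, hcos, hsin⟩ := exists_sqrt_mul_cos_sin_eq (s / a) (w / b)
    rw [h, sqrt_one, one_mul] at hcos hsin
    exact ⟨t, by rw [hcos]; field_simp, by rw [hsin]; field_simp⟩

def conicForm (A B C x y : ℝ) : ℝ := A * x ^ 2 + 2 * B * x * y + C * y ^ 2

lemma exists_angle_conicForm_rotate_eq {A B C d : ℝ} (hd : 0 ≤ d)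
    (hd2 : d ^ 2 = (A - C) ^ 2 + 4 * B ^ 2) :
    ∃ θ : ℝ, ∀ s w : ℝ, conicForm A B C (s * cos θ - w * sin θ) (s * sin θ + w * cos θ) =
      (A + C - d) / 2 * s ^ 2 + (A + C + d) / 2 * w ^ 2 := by
  obtain ⟨φ, hcos, hsin⟩ := exists_sqrt_mul_cos_sin_eq (C - A) (-2 * B)
  rw [show (C - A) ^ 2 + (-2 * B) ^ 2 = d ^ 2 by rw [hd2]; ring, sqrt_sq hd] at hcos hsin
  obtain ⟨θ, rfl⟩ : ∃ θ, φ = 2 * θ := ⟨φ / 2, by ring⟩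
  rw [cos_two_mul] at hcos
  rw [sin_two_mul] at hsin
  refine ⟨θ, fun s w => ?_⟩
  unfold conicForm
  -- eliminate `C - A` and `B` by `hcos`, `hsin`; the rest is a multiple of `sin² θ + cos² θ - 1`
  linear_combination
    (s ^ 2 * (1 / 2 - sin θ ^ 2) - 2 * s * w * cos θ * sin θ + w ^ 2 * (1 / 2 - cos θ ^ 2)) * hcos
    + (s ^ 2 * cos θ * sin θ + s * w * (cos θ ^ 2 - sin θ ^ 2) - w ^ 2 * cos θ * sin θ) * hsin
    + (s ^ 2 * (A - d) + 2 * s * w * d * cos θ * sin θ + w ^ 2 * (A + 2 * d * cos θ ^ 2))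
      * sin_sq_add_cos_sq θ

section RotatedFrame

variable (θ : ℝ)

lemma exists_eq_add_smul_add_smul (c p : ℝ × ℝ) :
    ∃ s w : ℝ, p = c + s • (cos θ, sin θ) + w • (-sin θ, cos θ) := by
  refine ⟨(p.1 - c.1) * cos θ + (p.2 - c.2) * sin θ,
    (p.2 - c.2) * cos θ - (p.1 - c.1) * sin θ, ?_⟩
  ext <;> simp only [Prod.fst_add, Prod.snd_add, Prod.smul_fst, Prod.smul_snd, smul_eq_mul]
  · linear_combination (c.1 - p.1) * cos_sq_add_sin_sq θ
  · linear_combination (c.2 - p.2) * cos_sq_add_sin_sq θ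

lemma add_smul_add_smul_inj (c : ℝ × ℝ) {s w s' w' : ℝ} :
    c + s • (cos θ, sin θ) + w • (-sin θ, cos θ) =
        c + s' • (cos θ, sin θ) + w' • (-sin θ, cos θ) ↔ s = s' ∧ w = w' := by
  refine ⟨fun h => ?_, by rintro ⟨rfl, rfl⟩; rfl⟩
  simp only [Prod.ext_iff, Prod.fst_add, Prod.snd_add, Prod.smul_fst, Prod.smul_snd,
    smul_eq_mul] at h
  obtain ⟨h1, h2⟩ := h
  constructor
  · linear_combination cos θ * h1 + sin θ * h2 + (s' - s) * cos_sq_add_sin_sq θ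
  · linear_combination -sin θ * h1 + cos θ * h2 + (w' - w) * cos_sq_add_sin_sq θ

end RotatedFrame

lemma setOf_conicForm_eq_ellipse {A B C R θ μ₁ μ₂ a b : ℝ} (c : ℝ × ℝ)
    (hθ : ∀ s w : ℝ, conicForm A B C (s * cos θ - w * sin θ) (s * sin θ + w * cos θ) =
      μ₁ * s ^ 2 + μ₂ * w ^ 2)
    (hR : R ≠ 0) (ha : a ≠ 0) (hb : b ≠ 0) (ha₁ : μ₁ * a ^ 2 = R) (hb₂ : μ₂ * b ^ 2 = R) :
    {p : ℝ × ℝ | conicForm A B C (p.1 - c.1) (p.2 - c.2) = R} =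
      {q : ℝ × ℝ | ∃ t : ℝ,
        q = c + (a * cos t) • (cos θ, sin θ) + (b * sin t) • (-sin θ, cos θ)} := by
  ext p
  obtain ⟨s, w, rfl⟩ := exists_eq_add_smul_add_smul θ c p
  simp only [Set.mem_ofPred_eq, add_smul_add_smul_inj, exists_eq_mul_cos_and_eq_mul_sin_iff ha hb]
  simp only [Prod.fst_add, Prod.snd_add, Prod.smul_fst, Prod.smul_snd, smul_eq_mul, add_assoc,
    add_sub_cancel_left, mul_neg, ← sub_eq_add_neg, hθ]
  have hscale : μ₁ * s ^ 2 + μ₂ * w ^ 2 = R * ((s / a) ^ 2 + (w / b) ^ 2) := by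
    rw [eq_div_of_mul_eq (pow_ne_zero 2 ha) ha₁, eq_div_of_mul_eq (pow_ne_zero 2 hb) hb₂]
    ring
  rw [hscale, mul_eq_left₀ hR]

lemma inscribedEllipse_eq_conicForm_sub (l k v x y : ℝ) :
    k ^ 2 * x ^ 2 + l ^ 2 * y ^ 2 - 2 * l * (k - 2 * v) * x * y - 2 * l * k * v * x
        - 2 * l ^ 2 * v * y + l ^ 2 * v ^ 2 =
      conicForm (k ^ 2) (-(l * (k - 2 * v))) (l ^ 2) (x - l / 2) (y - k / 2)
        - l ^ 2 * v * (k - v) := by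
  unfold conicForm
  ring

theorem stmt_2_general (l k v : ℝ) (hl : 0 < l) (hv : v ∈ Set.Ioo (0 : ℝ) k)
    (a b : ℝ)
    (ha : a = Real.sqrt (2 * l ^ 2 * (k - v) * v /
      (k ^ 2 + l ^ 2 - Real.sqrt ((k ^ 2 + l ^ 2) ^ 2 - 16 * l ^ 2 * (k - v) * v))))
    (hb : b = Real.sqrt (2 * l ^ 2 * (k - v) * v /
      (k ^ 2 + l ^ 2 + Real.sqrt ((k ^ 2 + l ^ 2) ^ 2 - 16 * l ^ 2 * (k - v) * v)))) :
    ∃ (c : ℝ × ℝ) (θ : ℝ),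
      {p : ℝ × ℝ |
        k ^ 2 * p.1 ^ 2 + l ^ 2 * p.2 ^ 2 - 2 * l * (k - 2 * v) * p.1 * p.2
          - 2 * l * k * v * p.1 - 2 * l ^ 2 * v * p.2 + l ^ 2 * v ^ 2 = 0} =
      {q : ℝ × ℝ | ∃ t : ℝ,
        q = c + (a * Real.cos t) • (Real.cos θ, Real.sin θ)
              + (b * Real.sin t) • (-Real.sin θ, Real.cos θ)} := by
  obtain ⟨hv₀, hvk⟩ := hv
  have hkv := sub_pos.2 hvk
  set d := √((k ^ 2 + l ^ 2) ^ 2 - 16 * l ^ 2 * (k - v) * v)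
  have hd2 : d ^ 2 = (k ^ 2 - l ^ 2) ^ 2 + 4 * (-(l * (k - 2 * v))) ^ 2 := by
    rw [sq_sqrt (by nlinarith [sq_nonneg (k ^ 2 - l ^ 2), sq_nonneg (l * (k - 2 * v))])]
    ring
  have hd₁ : 0 < k ^ 2 + l ^ 2 - d := by
    rw [sub_pos, sqrt_lt' (by positivity)]
    nlinarith [mul_pos (mul_pos (pow_pos hl 2) hkv) hv₀]
  have hd₂ : 0 < k ^ 2 + l ^ 2 + d := by positivity
  have ha₁ : (k ^ 2 + l ^ 2 - d) / 2 * a ^ 2 = l ^ 2 * v * (k - v) := by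
    rw [ha, sq_sqrt (by positivity)]
    field_simp
  have hb₂ : (k ^ 2 + l ^ 2 + d) / 2 * b ^ 2 = l ^ 2 * v * (k - v) := by
    rw [hb, sq_sqrt (by positivity)]
    field_simp
  have hconic : {p : ℝ × ℝ | k ^ 2 * p.1 ^ 2 + l ^ 2 * p.2 ^ 2 - 2 * l * (k - 2 * v) * p.1 * p.2
      - 2 * l * k * v * p.1 - 2 * l ^ 2 * v * p.2 + l ^ 2 * v ^ 2 = 0} =
      {p | conicForm (k ^ 2) (-(l * (k - 2 * v))) (l ^ 2) (p.1 - l / 2) (p.2 - k / 2) =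
        l ^ 2 * v * (k - v)} := by
    simp only [inscribedEllipse_eq_conicForm_sub, sub_eq_zero]
  obtain ⟨θ, hθ⟩ := exists_angle_conicForm_rotate_eq (sqrt_nonneg _) hd2
  refine ⟨(l / 2, k / 2), θ, hconic.trans ?_⟩
  exact setOf_conicForm_eq_ellipse (l / 2, k / 2) hθ (by positivity)
    (ha ▸ (sqrt_pos.2 (by positivity)).ne') (hb ▸ (sqrt_pos.2 (by positivity)).ne') ha₁ hb₂

theorem stmt_2 (l k v : ℝ) (hl : 0 < l) (hk : 0 < k) (hv : v ∈ Set.Ioo (0 : ℝ) k)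
    (a b : ℝ)
    (ha : a = Real.sqrt (2 * l ^ 2 * (k - v) * v /
      (k ^ 2 + l ^ 2 - Real.sqrt ((k ^ 2 + l ^ 2) ^ 2 - 16 * l ^ 2 * (k - v) * v))))
    (hb : b = Real.sqrt (2 * l ^ 2 * (k - v) * v /
      (k ^ 2 + l ^ 2 + Real.sqrt ((k ^ 2 + l ^ 2) ^ 2 - 16 * l ^ 2 * (k - v) * v)))) :
    ∃ (c : ℝ × ℝ) (θ : ℝ),
      {p : ℝ × ℝ |
        k ^ 2 * p.1 ^ 2 + l ^ 2 * p.2 ^ 2 - 2 * l * (k - 2 * v) * p.1 * p.2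
          - 2 * l * k * v * p.1 - 2 * l ^ 2 * v * p.2 + l ^ 2 * v ^ 2 = 0} =
      {q : ℝ × ℝ | ∃ t : ℝ,
        q = c + (a * Real.cos t) • (Real.cos θ, Real.sin θ)
              + (b * Real.sin t) • (-Real.sin θ, Real.cos θ)} :=
  stmt_2_general l k v hl hv a b ha hb
end

section
/- Let l, k > 0, d ≥ 0, and let E be an ellipse (the image of the unit circle under an invertible affine map of ℝ²) such that E is contained in the parallelogram D = convex hull of O=(0,0), P=(l,0), Q=(d,k), R=(l+d,k) and E has nonempty intersection with each of the four sides [O,P], [O,Q], [P,R], [Q,R] of D. Then there exists v ∈ (0, k) such that E = {(x,y) ∈ ℝ² : k³x² + (k(d+l)² − 4dlv)y² − 2k(kd − 2lv + kl)xy − 2k²lv·x + 2klv(d−l)·y + kl²v² = 0}. -/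
/-- A quadratic with positive leading coeff, negative constant term has a negative root. -/
lemma qrn (c b a : ℝ) (hc : 0 < c) (ha : a < 0) : ∃ y, y < 0 ∧ c*y^2 + b*y + a = 0 := by
  have hd0 : (0:ℝ) ≤ b^2 - 4*c*a := by nlinarith [sq_nonneg b]
  set s := Real.sqrt (b^2 - 4*c*a) with hs
  have hsq : s^2 = b^2 - 4*c*a := Real.sq_sqrt hd0
  have hsb : |b| < s := by
    have h1 : b^2 < b^2 - 4*c*a := by nlinarith
    have := Real.sqrt_lt_sqrt (sq_nonneg b) h1
    rwa [Real.sqrt_sq_eq_abs] at this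
  refine ⟨(-b - s)/(2*c), ?_, ?_⟩
  · apply div_neg_of_neg_of_pos
    · have : -b ≤ |b| := neg_le_abs b
      linarith
    · linarith
  · field_simp
    ring_nf
    nlinarith [hsq]

/-- Tangency: a nonnegative quadratic with a known root has vertex at that root. -/
lemma tang (A D F x0 : ℝ) (hA : 0 < A) (h0 : ∀ x, 0 ≤ A*x^2 + D*x + F)
    (hx : A*x0^2 + D*x0 + F = 0) : D = -2*A*x0 ∧ F = A*x0^2 := by
  set r := 2*A*x0 + D with hr
  have hr0 : r = 0 := by
    by_contra hrne
    have h2 := h0 (x0 - r/(2*A))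
    have hval : A*(x0 - r/(2*A))^2 + D*(x0-r/(2*A)) + F
        = (A*x0^2 + D*x0 + F) - r^2/(4*A) := by
      field_simp
      ring
    rw [hval, hx] at h2
    have : 0 < r^2 := by positivity
    have : 0 < r^2/(4*A) := by positivity
    linarith
  have hD : D = -2*A*x0 := by
    have : 2*A*x0 + D = 0 := by rw [← hr]; exact hr0
    linarith
  exact ⟨hD, by linear_combination hx - x0*hD⟩

lemma sq_eq_of_nonneg' {a b : ℝ} (ha : 0 ≤ a) (hb : 0 ≤ b) (h : a^2 = b^2) : a = b := by
  nlinarith [sq_nonneg (a-b), sq_nonneg (a+b)]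

lemma sqcases {a b : ℝ} (h : a^2 = b^2) : a = b ∨ a = -b := by
  have h2 : (a-b)*(a+b) = 0 := by linear_combination h
  rcases mul_eq_zero.mp h2 with h'|h'
  · left; linarith
  · right; linarith

lemma s0_bounds {s0 : ℝ} (hs0 : 0 ≤ s0) (h : (1-2*s0)^2 < 1) : 0 < s0 ∧ s0 < 1 := by
  constructor <;> nlinarith [h, hs0]

/-- Core algebra: a positive-definite quadratic tangent to the four sides of the
unit square (expressed coefficientwise) has the one-parameter family form. -/
lemma core (A B C D E F s0 t0 x1 y1 : ℝ) (hA : 0 < A) (hpd : B^2 < 4*A*C)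
    (hB0 : ∀ x, 0 ≤ A*x^2 + D*x + F) (hs0 : 0 ≤ s0) (hB1 : A*s0^2 + D*s0 + F = 0)
    (hL0 : ∀ y, 0 ≤ C*y^2 + E*y + F) (ht0 : 0 ≤ t0) (hL1 : C*t0^2 + E*t0 + F = 0)
    (hT0 : ∀ x, 0 ≤ A*x^2 + (B+D)*x + (C+E+F)) (hx1 : 0 ≤ x1)
    (hT1 : A*x1^2 + (B+D)*x1 + (C+E+F) = 0)
    (hR0 : ∀ y, 0 ≤ C*y^2 + (B+E)*y + (A+D+F)) (hy1 : 0 ≤ y1)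
    (hR1 : C*y1^2 + (B+E)*y1 + (A+D+F) = 0) :
    0 < s0 ∧ s0 < 1 ∧ C = A ∧ B = -2*A*(1-2*s0) ∧ D = -2*A*s0 ∧ E = -2*A*s0 ∧ F = A*s0^2 := by
  have hC : 0 < C := by nlinarith [sq_nonneg B]
  obtain ⟨hD, hF⟩ := tang A D F s0 hA hB0 hB1
  obtain ⟨hE, hF2⟩ := tang C E F t0 hC hL0 hL1
  obtain ⟨hBD, hTF⟩ := tang A (B+D) (C+E+F) x1 hA hT0 hT1
  obtain ⟨hBE, hRF⟩ := tang C (B+E) (A+D+F) y1 hC hR0 hR1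
  set m := Real.sqrt (A*C) with hmdef
  have hm2 : m^2 = A*C := Real.sq_sqrt (by positivity)
  have hm0 : 0 < m := Real.sqrt_pos.mpr (by positivity)
  have hAC : A*s0^2 = C*t0^2 := by rw [← hF, hF2]
  have hCt : C*t0 = m*s0 := by
    apply sq_eq_of_nonneg' (by positivity) (by positivity)
    linear_combination (-s0^2)*hm2 - C*hAC
  have hE' : E = -2*m*s0 := by linear_combination hE - 2*hCt
  have heq1 : (A*x1)^2 = (m - A*s0)^2 := by
    linear_combination (-A)*hTF - hm2 + A*hE' + A*hF
  have heq2 : (C*y1)^2 = (m - m*s0)^2 := by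
    linear_combination (-C)*hRF + C*hD + C*hF - (1-s0)^2*hm2
  have hBx : B = -2*(A*x1) + 2*A*s0 := by linarith [hBD, hD]
  have hBy : B = -2*(C*y1) + 2*m*s0 := by linarith [hBE, hE']
  rcases sqcases heq1 with h1 | h1
  · rcases sqcases heq2 with h2 | h2
    · -- main case
      have hs00 : 4*s0*(A - m) = 0 := by
        have e1 : B = 4*A*s0 - 2*m := by rw [hBx, h1]; ring
        have e2 : B = 4*m*s0 - 2*m := by rw [hBy, h2]; ring
        linarith [e1, e2]
      rcases mul_eq_zero.mp hs00 with h3 | h3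
      · -- 4*s0 = 0 ⇒ s0 = 0 ⇒ B = -2m ⇒ contradiction with hpd
        have hs0z : s0 = 0 := by linarith
        have hB2 : B^2 = 4*A*C := by
          rw [show B = -2*m by rw [hBy, h2, hs0z]; ring]
          linear_combination 4*hm2
        exact absurd hpd (not_lt.mpr hB2.ge)
      · -- A = m
        have hmA : m = A := by linarith
        have hCA : C = A := by
          have h4 : A*C = A*A := by rw [← hm2, hmA]; ring
          exact mul_left_cancel₀ hA.ne' h4
        have hBval : B = -2*A*(1-2*s0) := by
          rw [hBy, h2, hmA]; ring
        have hpd2 : 4*A^2*(1-2*s0)^2 < 4*A^2 := by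
          calc 4*A^2*(1-2*s0)^2 = B^2 := by rw [hBval]; ring
          _ < 4*A*C := hpd
          _ = 4*A^2 := by rw [hCA]; ring
        have h4A : (0:ℝ) < 4*A^2 := by positivity
        have hineq : (1-2*s0)^2 < 1 :=
          (mul_lt_mul_iff_right₀ h4A).mp (by rw [mul_one]; exact hpd2)
        obtain ⟨hu, hv⟩ := s0_bounds hs0 hineq
        exact ⟨hu, hv, hCA, hBval, hD, by rw [hE', hmA], hF⟩
    · -- C*y1 = -(m - m*s0) : B = 2m, contradiction
      have hB2 : B^2 = 4*A*C := by
        rw [show B = 2*m by rw [hBy, h2]; ring]; linear_combination 4*hm2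
      exact absurd hpd (not_lt.mpr hB2.ge)
  · -- A*x1 = -(m - A*s0) : B = 2m, contradiction
    have hB2 : B^2 = 4*A*C := by
      rw [show B = 2*m by rw [hBx, h1]; ring]; linear_combination 4*hm2
    exact absurd hpd (not_lt.mpr hB2.ge)

/-- Convexity of an affine halfplane in ℝ × ℝ. -/
lemma convex_aff_halfplane (c1 c2 c3 : ℝ) :
    Convex ℝ {p : ℝ×ℝ | 0 ≤ c1*p.1 + c2*p.2 + c3} := by
  intro x hx y hy a b ha hb hab
  simp only [Set.mem_setOf_eq] at *
  have e : c1*(a•x + b•y).1 + c2*(a•x+b•y).2 + c3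
      = a*(c1*x.1+c2*x.2+c3) + b*(c1*y.1+c2*y.2+c3) := by
    simp only [Prod.fst_add, Prod.snd_add, Prod.smul_fst, Prod.smul_snd, smul_eq_mul]
    linear_combination (-c3)*hab
  rw [e]
  exact add_nonneg (mul_nonneg ha hx) (mul_nonneg hb hy)
set_option maxHeartbeats 1000000 in
theorem stmt_4 (l k d : ℝ) (hl : 0 < l) (hk : 0 < k) (hd : 0 ≤ d)
    (E : Set (ℝ × ℝ)) (hE : IsEllipse E)
    (hsub : E ⊆ convexHull ℝ {((0 : ℝ), (0 : ℝ)), (l, 0), (d, k), (l + d, k)})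
    (h1 : (E ∩ segment ℝ ((0 : ℝ), (0 : ℝ)) (l, 0)).Nonempty)
    (h2 : (E ∩ segment ℝ ((0 : ℝ), (0 : ℝ)) (d, k)).Nonempty)
    (h3 : (E ∩ segment ℝ (l, (0 : ℝ)) (l + d, k)).Nonempty)
    (h4 : (E ∩ segment ℝ (d, k) (l + d, k)).Nonempty) :
    ∃ v ∈ Set.Ioo (0 : ℝ) k, E = {p : ℝ × ℝ |
      k ^ 3 * p.1 ^ 2 + (k * (d + l) ^ 2 - 4 * d * l * v) * p.2 ^ 2
        - 2 * k * (k * d - 2 * l * v + k * l) * p.1 * p.2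
        - 2 * k ^ 2 * l * v * p.1 + 2 * k * l * v * (d - l) * p.2 + k * l ^ 2 * v ^ 2 = 0} := by
  obtain ⟨f, hEf⟩ := hE
  have hk0 : k ≠ 0 := hk.ne'
  have hl0 : l ≠ 0 := hl.ne'
  -- membership characterization
  have hmem : ∀ p : ℝ×ℝ, p ∈ E ↔ ((f.symm p).1^2 + (f.symm p).2^2 = 1) := by
    intro p
    rw [hEf]
    constructor
    · rintro ⟨u, hu, rfl⟩
      simp only [AffineEquiv.symm_apply_apply]
      exact hu
    · intro h
      exact ⟨f.symm p, h, f.apply_symm_apply p⟩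
  -- affine decomposition of f.symm
  have hgl : ∀ p : ℝ×ℝ, (f.symm : ℝ×ℝ → ℝ×ℝ) p = f.symm.linear p + f.symm 0 := by
    intro p
    have h := f.symm.map_vadd (0:ℝ×ℝ) p
    simpa using h
  rcases hu : f.symm.linear ((l, 0) : ℝ×ℝ) with ⟨α, γ⟩
  rcases hv : f.symm.linear ((d, k) : ℝ×ℝ) with ⟨β, δ⟩
  rcases hz : (f.symm (0 : ℝ×ℝ) : ℝ×ℝ) with ⟨p₀, q₀⟩
  have hker : ∀ z : ℝ×ℝ, f.symm.linear z = 0 → z = 0 := by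
    intro z h
    exact (LinearEquiv.map_eq_zero_iff _).mp h
  -- key expansion
  have hw : ∀ X Y : ℝ, (f.symm (l*X + d*Y, k*Y) : ℝ×ℝ) = (α*X + β*Y + p₀, γ*X + δ*Y + q₀) := by
    intro X Y
    have hT : ((l*X + d*Y, k*Y) : ℝ×ℝ) = X • ((l,0):ℝ×ℝ) + Y • ((d,k):ℝ×ℝ) := by
      simp only [Prod.smul_mk, smul_eq_mul, Prod.mk_add_mk, Prod.mk.injEq]
      constructor <;> ring
    rw [hgl, hT, map_add, map_smul, map_smul, hu, hv, hz]
    simp only [Prod.smul_mk, smul_eq_mul, Prod.mk_add_mk, Prod.mk.injEq]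
    constructor <;> ring
  -- nondegeneracy
  have hdet : α*δ - β*γ ≠ 0 := by
    intro hdet0
    have hz1 : f.symm.linear (δ • ((l,0):ℝ×ℝ) - γ • ((d,k):ℝ×ℝ)) = 0 := by
      rw [map_sub, map_smul, map_smul, hu, hv]
      simp only [Prod.smul_mk, smul_eq_mul, Prod.mk_sub_mk, Prod.mk_eq_zero]
      refine ⟨by linarith, by ring⟩
    have hz1' := hker _ hz1
    simp only [Prod.smul_mk, smul_eq_mul, Prod.mk_sub_mk, Prod.mk_eq_zero] at hz1'
    have hγ : γ = 0 := by
      have h2 := hz1'.2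
      have : γ * k = 0 := by linarith
      exact by
        rcases mul_eq_zero.mp this with h|h
        · exact h
        · exact absurd h hk0
    have hδ : δ = 0 := by
      have h1 := hz1'.1
      rw [hγ] at h1
      have : δ * l = 0 := by linarith
      rcases mul_eq_zero.mp this with h|h
      · exact h
      · exact absurd h hl0
    have hz2 : f.symm.linear (β • ((l,0):ℝ×ℝ) - α • ((d,k):ℝ×ℝ)) = 0 := by
      rw [map_sub, map_smul, map_smul, hu, hv]
      simp only [Prod.smul_mk, smul_eq_mul, Prod.mk_sub_mk, Prod.mk_eq_zero]
      refine ⟨by ring, by linarith⟩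
    have hz2' := hker _ hz2
    simp only [Prod.smul_mk, smul_eq_mul, Prod.mk_sub_mk, Prod.mk_eq_zero] at hz2'
    have hα : α = 0 := by
      have h2 := hz2'.2
      have : α * k = 0 := by linarith
      rcases mul_eq_zero.mp this with h|h
      · exact h
      · exact absurd h hk0
    have hβ : β = 0 := by
      have h1 := hz2'.1
      rw [hα] at h1
      have : β * l = 0 := by linarith
      rcases mul_eq_zero.mp this with h|h
      · exact h
      · exact absurd h hl0
    have : ((l,0) : ℝ×ℝ) = 0 := by
      apply hker
      rw [hu, hα, hγ]
      rfl
    have := congrArg Prod.fst this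
    simp at this
    exact hl0 this
  have hA0 : 0 < α^2+γ^2 := by
    rcases lt_or_ge 0 (α^2+γ^2) with h|h
    · exact h
    · exfalso
      apply hdet
      have hα : α = 0 := by nlinarith [sq_nonneg α, sq_nonneg γ]
      have hγ : γ = 0 := by nlinarith [sq_nonneg α, sq_nonneg γ]
      rw [hα, hγ]; ring
  have hC0 : 0 < β^2+δ^2 := by
    rcases lt_or_ge 0 (β^2+δ^2) with h|h
    · exact h
    · exfalso
      apply hdet
      have hβ : β = 0 := by nlinarith [sq_nonneg β, sq_nonneg δ]
      have hδ : δ = 0 := by nlinarith [sq_nonneg β, sq_nonneg δ]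
      rw [hβ, hδ]; ring
  have hpd : (2*(α*β+γ*δ))^2 < 4*(α^2+γ^2)*(β^2+δ^2) := by
    have hdsq : 0 < (α*δ-β*γ)^2 := sq_pos_of_ne_zero hdet
    nlinarith [hdsq]
  -- membership via the square-coordinates quadratic
  have hQf : ∀ X Y : ℝ, (((l*X + d*Y, k*Y) : ℝ×ℝ) ∈ E ↔
      (α^2+γ^2)*X^2 + (2*(α*β+γ*δ))*X*Y + (β^2+δ^2)*Y^2 + (2*(α*p₀+γ*q₀))*X
        + (2*(β*p₀+δ*q₀))*Y + (p₀^2+q₀^2-1) = 0) := by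
    intro X Y
    rw [hmem, hw]
    constructor <;> intro h <;> linear_combination h
  -- halfplane bounds
  have hhalf : ∀ c1 c2 c3 : ℝ, 0 ≤ c3 → 0 ≤ c1*l + c3 → 0 ≤ c1*d + c2*k + c3 →
      0 ≤ c1*(l+d) + c2*k + c3 → ∀ p ∈ E, 0 ≤ c1*p.1 + c2*p.2 + c3 := by
    intro c1 c2 c3 h01 h02 h03 h04 p hp
    have h5 : E ⊆ {q : ℝ×ℝ | 0 ≤ c1*q.1 + c2*q.2 + c3} := by
      refine hsub.trans (convexHull_min ?_ (convex_aff_halfplane c1 c2 c3))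
      intro q hq
      simp only [Set.mem_insert_iff, Set.mem_singleton_iff] at hq
      rcases hq with rfl | rfl | rfl | rfl
      · simpa using h01
      · simpa using h02
      · simpa using h03
      · simpa using h04
    exact h5 hp
  -- nonnegativity on each of the four side lines
  have hbot : ∀ x : ℝ, 0 ≤ (α^2+γ^2)*x^2 + (2*(α*p₀+γ*q₀))*x + (p₀^2+q₀^2-1) := by
    intro x
    by_contra hneg
    push_neg at hneg
    obtain ⟨y, hy, hroot⟩ := qrn (β^2+δ^2) (2*(α*β+γ*δ)*x + 2*(β*p₀+δ*q₀)) _ hC0 hneg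
    have hmemE : ((l*x + d*y, k*y) : ℝ×ℝ) ∈ E := (hQf x y).mpr (by linear_combination hroot)
    have hh := hhalf 0 1 0 (by norm_num) (by norm_num) (by linarith) (by linarith) _ hmemE
    simp only at hh
    nlinarith [mul_pos hk (neg_pos.mpr hy), hh]
  have htop : ∀ x : ℝ, 0 ≤ (α^2+γ^2)*x^2 + (2*(α*β+γ*δ) + 2*(α*p₀+γ*q₀))*x
      + (β^2+δ^2 + 2*(β*p₀+δ*q₀) + (p₀^2+q₀^2-1)) := by
    intro x
    by_contra hneg
    push_neg at hneg
    obtain ⟨t, ht, hroot⟩ := qrn (β^2+δ^2)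
      (-(2*(β^2+δ^2) + 2*(α*β+γ*δ)*x + 2*(β*p₀+δ*q₀))) _ hC0 hneg
    have hmemE : ((l*x + d*(1-t), k*(1-t)) : ℝ×ℝ) ∈ E :=
      (hQf x (1-t)).mpr (by linear_combination hroot)
    have hh := hhalf 0 (-1) k hk.le (by linarith) (by linarith) (by linarith) _ hmemE
    simp only at hh
    nlinarith [mul_pos hk (neg_pos.mpr ht), hh]
  have hleft : ∀ y : ℝ, 0 ≤ (β^2+δ^2)*y^2 + (2*(β*p₀+δ*q₀))*y + (p₀^2+q₀^2-1) := by
    intro y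
    by_contra hneg
    push_neg at hneg
    obtain ⟨x, hx, hroot⟩ := qrn (α^2+γ^2) (2*(α*β+γ*δ)*y + 2*(α*p₀+γ*q₀)) _ hA0 hneg
    have hmemE : ((l*x + d*y, k*y) : ℝ×ℝ) ∈ E := (hQf x y).mpr (by linear_combination hroot)
    have hh := hhalf k (-d) 0 (by norm_num) (by linarith [mul_pos hk hl])
      (by linarith) (by linarith [mul_pos hk hl]) _ hmemE
    simp only at hh
    nlinarith [mul_pos (mul_pos hk hl) (neg_pos.mpr hx), hh]
  have hright : ∀ y : ℝ, 0 ≤ (β^2+δ^2)*y^2 + (2*(α*β+γ*δ) + 2*(β*p₀+δ*q₀))*y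
      + (α^2+γ^2 + 2*(α*p₀+γ*q₀) + (p₀^2+q₀^2-1)) := by
    intro y
    by_contra hneg
    push_neg at hneg
    obtain ⟨t, ht, hroot⟩ := qrn (α^2+γ^2)
      (-(2*(α^2+γ^2) + 2*(α*β+γ*δ)*y + 2*(α*p₀+γ*q₀))) _ hA0 hneg
    have hmemE : ((l*(1-t) + d*y, k*y) : ℝ×ℝ) ∈ E :=
      (hQf (1-t) y).mpr (by linear_combination hroot)
    have hh := hhalf (-k) d (k*l) (by positivity) (by linarith) (by linarith [mul_pos hk hl])
      (by linarith) _ hmemE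
    simp only at hh
    nlinarith [mul_pos (mul_pos hk hl) (neg_pos.mpr ht), hh]
  -- roots on each side from the four intersection hypotheses
  obtain ⟨z1, hz1E, a1, b1, ha1, hb1, hab1, hz1⟩ := h1
  obtain ⟨z2, hz2E, a2, b2, ha2, hb2, hab2, hz2⟩ := h2
  obtain ⟨z3, hz3E, a3, b3, ha3, hb3, hab3, hz3⟩ := h3
  obtain ⟨z4, hz4E, a4, b4, ha4, hb4, hab4, hz4⟩ := h4
  have hB1 : (α^2+γ^2)*b1^2 + (2*(α*p₀+γ*q₀))*b1 + (p₀^2+q₀^2-1) = 0 := by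
    have he : ((l*b1 + d*0, k*0) : ℝ×ℝ) = z1 := by
      rw [← hz1]
      simp only [Prod.smul_mk, smul_eq_mul, Prod.mk_add_mk, Prod.mk.injEq]
      refine ⟨by ring, by ring⟩
    have := (hQf b1 0).mp (he ▸ hz1E)
    linear_combination this
  have hL1 : (β^2+δ^2)*b2^2 + (2*(β*p₀+δ*q₀))*b2 + (p₀^2+q₀^2-1) = 0 := by
    have he : ((l*0 + d*b2, k*b2) : ℝ×ℝ) = z2 := by
      rw [← hz2]
      simp only [Prod.smul_mk, smul_eq_mul, Prod.mk_add_mk, Prod.mk.injEq]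
      refine ⟨by ring, by ring⟩
    have := (hQf 0 b2).mp (he ▸ hz2E)
    linear_combination this
  have hR1 : (β^2+δ^2)*b3^2 + (2*(α*β+γ*δ) + 2*(β*p₀+δ*q₀))*b3
      + (α^2+γ^2 + 2*(α*p₀+γ*q₀) + (p₀^2+q₀^2-1)) = 0 := by
    have he : ((l*1 + d*b3, k*b3) : ℝ×ℝ) = z3 := by
      rw [← hz3]
      simp only [Prod.smul_mk, smul_eq_mul, Prod.mk_add_mk, Prod.mk.injEq]
      refine ⟨by linear_combination (-l)*hab3, by ring⟩
    have := (hQf 1 b3).mp (he ▸ hz3E)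
    linear_combination this
  have hT1 : (α^2+γ^2)*b4^2 + (2*(α*β+γ*δ) + 2*(α*p₀+γ*q₀))*b4
      + (β^2+δ^2 + 2*(β*p₀+δ*q₀) + (p₀^2+q₀^2-1)) = 0 := by
    have he : ((l*b4 + d*1, k*1) : ℝ×ℝ) = z4 := by
      rw [← hz4]
      simp only [Prod.smul_mk, smul_eq_mul, Prod.mk_add_mk, Prod.mk.injEq]
      refine ⟨by linear_combination (-d)*hab4, by linear_combination (-k)*hab4⟩
    have := (hQf b4 1).mp (he ▸ hz4E)
    linear_combination this
  -- apply the core algebra lemma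
  obtain ⟨hs0pos, hs0lt, hCA, hBv, hDv, hEv, hFv⟩ :=
    core (α^2+γ^2) (2*(α*β+γ*δ)) (β^2+δ^2) (2*(α*p₀+γ*q₀)) (2*(β*p₀+δ*q₀)) (p₀^2+q₀^2-1)
      b1 b2 b4 b3 hA0 hpd hbot hb1 hB1 hleft hb2 hL1 htop hb4 hT1 hright hb3 hR1
  -- conclude
  refine ⟨k*b1, ⟨mul_pos hk hs0pos, by nlinarith⟩, ?_⟩
  ext p
  obtain ⟨p1, p2⟩ := p
  simp only [Set.mem_setOf_eq]
  set X := (p1 - d/k*p2)/l with hX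
  set Y := p2/k with hY
  have hXY : ((l*X + d*Y, k*Y) : ℝ×ℝ) = (p1, p2) := by
    rw [Prod.mk.injEq]
    constructor
    · rw [hX, hY]; field_simp; ring
    · rw [hY]; field_simp
  have hfact : (α^2+γ^2)*X^2 + (2*(α*β+γ*δ))*X*Y + (β^2+δ^2)*Y^2 + (2*(α*p₀+γ*q₀))*X
        + (2*(β*p₀+δ*q₀))*Y + (p₀^2+q₀^2-1)
      = (α^2+γ^2) * (X^2 - 2*(1-2*b1)*X*Y + Y^2 - 2*b1*X - 2*b1*Y + b1^2) := by
    linear_combination X*Y*hBv + Y^2*hCA + X*hDv + Y*hEv + hFv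
  have htv : k ^ 3 * p1 ^ 2 + (k * (d + l) ^ 2 - 4 * d * l * (k*b1)) * p2 ^ 2
        - 2 * k * (k * d - 2 * l * (k*b1) + k * l) * p1 * p2
        - 2 * k ^ 2 * l * (k*b1) * p1 + 2 * k * l * (k*b1) * (d - l) * p2 + k * l ^ 2 * (k*b1) ^ 2
      = (k^3*l^2) * (X^2 - 2*(1-2*b1)*X*Y + Y^2 - 2*b1*X - 2*b1*Y + b1^2) := by
    rw [hX, hY]
    field_simp
    ring
  constructor
  · intro hpE
    have h0 := (hQf X Y).mp (by rw [hXY]; exact hpE)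
    rw [hfact] at h0
    rcases mul_eq_zero.mp h0 with h|h
    · exact absurd h hA0.ne'
    · rw [htv, h, mul_zero]
  · intro hpt
    rw [htv] at hpt
    have hkl : (k^3*l^2) ≠ 0 := by positivity
    rcases mul_eq_zero.mp hpt with h|h
    · exact absurd h hkl
    · have h0 : ((l*X + d*Y, k*Y) : ℝ×ℝ) ∈ E := (hQf X Y).mpr (by rw [hfact, h, mul_zero])
      rwa [hXY] at h0
end

section
/- Let l, k > 0, d ≥ 0 and v ∈ (0, k), and let Ψ_v = {(x,y) ∈ ℝ² : k³x² + (k(d+l)² − 4dlv)y² − 2k(kd − 2lv + kl)xy − 2k²lv·x + 2klv(d−l)·y + kl²v² = 0}. Suppose Ψ_v = {c + a·cos t·(cos θ, sin θ) + b·sin t·(−sin θ, cos θ) : t ∈ ℝ} for some c ∈ ℝ², θ ∈ ℝ, and real numbers a ≥ b > 0 (so a and b are the lengths of the semi-major and semi-minor axes of Ψ_v). Then b²/a² = 1 + (m(v) + (4dlv − k((d+l)² + k²))·√(m(v))) / (8k²l²(k−v)v), where m(v) = 16l²(d²+k²)v² − 8lk(dk² + d³ + 2ld² + l²d + 2k²l)v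 + k²(2dl + l² + d² + k²)². -/
set_option maxHeartbeats 1000000 in
theorem ellipse_aux (A B C D E F X Y ct st c5 s5 a b : ℝ)
    (pyth : ct ^ 2 + st ^ 2 = 1) (p5 : c5 ^ 2 + s5 ^ 2 = 1) (hcs : c5 * s5 = 1 / 2)
    (ha : a ≠ 0) (hb : b ≠ 0)
    (e1 : A * (X + a * ct) ^ 2 + C * (Y + a * st) ^ 2 + B * (X + a * ct) * (Y + a * st)
      + D * (X + a * ct) + E * (Y + a * st) + F = 0)
    (e2 : A * (X - a * ct) ^ 2 + C * (Y - a * st) ^ 2 + B * (X - a * ct) * (Y - a * st)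
      + D * (X - a * ct) + E * (Y - a * st) + F = 0)
    (e3 : A * (X - b * st) ^ 2 + C * (Y + b * ct) ^ 2 + B * (X - b * st) * (Y + b * ct)
      + D * (X - b * st) + E * (Y + b * ct) + F = 0)
    (e4 : A * (X + b * st) ^ 2 + C * (Y - b * ct) ^ 2 + B * (X + b * st) * (Y - b * ct)
      + D * (X + b * st) + E * (Y - b * ct) + F = 0)
    (e5 : A * (X + a * c5 * ct - b * s5 * st) ^ 2 + C * (Y + a * c5 * st + b * s5 * ct) ^ 2
      + B * (X + a * c5 * ct - b * s5 * st) * (Y + a * c5 * st + b * s5 * ct)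
      + D * (X + a * c5 * ct - b * s5 * st) + E * (Y + a * c5 * st + b * s5 * ct) + F = 0) :
    ∃ α γ : ℝ, α * a ^ 2 = γ * b ^ 2 ∧ α + γ = A + C ∧ 4 * (α * γ) = 4 * A * C - B ^ 2 := by
  have hAF : (A * ct ^ 2 + B * ct * st + C * st ^ 2) * a ^ 2
      + (A * X ^ 2 + B * X * Y + C * Y ^ 2 + D * X + E * Y + F) = 0 := by
    linear_combination (1/2 : ℝ) * e1 + (1/2 : ℝ) * e2
  have hDa : ((2 * A * X + B * Y + D) * ct + (B * X + 2 * C * Y + E) * st) * a = 0 := by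
    linear_combination (1/2 : ℝ) * e1 - (1/2 : ℝ) * e2
  have hCF : (A * st ^ 2 - B * ct * st + C * ct ^ 2) * b ^ 2
      + (A * X ^ 2 + B * X * Y + C * Y ^ 2 + D * X + E * Y + F) = 0 := by
    linear_combination (1/2 : ℝ) * e3 + (1/2 : ℝ) * e4
  have hEb : (-((2 * A * X + B * Y + D) * st) + (B * X + 2 * C * Y + E) * ct) * b = 0 := by
    linear_combination (1/2 : ℝ) * e3 - (1/2 : ℝ) * e4
  have hBab : (2 * (C - A) * ct * st + B * (ct ^ 2 - st ^ 2)) * (a * b) = 0 := by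
    linear_combination (2 : ℝ) * e5 - 2 * c5 * hDa - 2 * s5 * hEb
      - 2 * c5 ^ 2 * hAF - 2 * s5 ^ 2 * hCF
      + 2 * (A * X ^ 2 + B * X * Y + C * Y ^ 2 + D * X + E * Y + F) * p5
      - 2 * a * b * (2 * (C - A) * ct * st + B * (ct ^ 2 - st ^ 2)) * hcs
  have hB0 : 2 * (C - A) * ct * st + B * (ct ^ 2 - st ^ 2) = 0 := by
    rcases mul_eq_zero.mp hBab with h | h
    · exact h
    · exact absurd h (mul_ne_zero ha hb)
  refine ⟨A * ct ^ 2 + B * ct * st + C * st ^ 2,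
    A * st ^ 2 - B * ct * st + C * ct ^ 2, by linarith, ?_, ?_⟩
  · linear_combination (A + C) * pyth
  · linear_combination (4 * A * C - B ^ 2) * (ct ^ 2 + st ^ 2 + 1) * pyth
      + (2 * (C - A) * ct * st + B * (ct ^ 2 - st ^ 2)) * hB0

set_option maxHeartbeats 1000000 in
theorem stmt_5 (l k d v : ℝ) (hl : 0 < l) (hk : 0 < k) (hd : 0 ≤ d)
    (hv : v ∈ Set.Ioo (0 : ℝ) k)
    (m : ℝ) (hm : m = 16 * l ^ 2 * (d ^ 2 + k ^ 2) * v ^ 2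
      - 8 * l * k * (d * k ^ 2 + d ^ 3 + 2 * l * d ^ 2 + l ^ 2 * d + 2 * k ^ 2 * l) * v
      + k ^ 2 * (2 * d * l + l ^ 2 + d ^ 2 + k ^ 2) ^ 2)
    (c : ℝ × ℝ) (θ a b : ℝ) (hab : b ≤ a) (hb : 0 < b)
    (hΨ : {p : ℝ × ℝ |
      k ^ 3 * p.1 ^ 2 + (k * (d + l) ^ 2 - 4 * d * l * v) * p.2 ^ 2
        - 2 * k * (k * d - 2 * l * v + k * l) * p.1 * p.2
        - 2 * k ^ 2 * l * v * p.1 + 2 * k * l * v * (d - l) * p.2 + k * l ^ 2 * v ^ 2 = 0} =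
      {q : ℝ × ℝ | ∃ t : ℝ,
        q = c + (a * Real.cos t) • (Real.cos θ, Real.sin θ)
              + (b * Real.sin t) • (-Real.sin θ, Real.cos θ)}) :
    b ^ 2 / a ^ 2 =
      1 + (m + (4 * d * l * v - k * ((d + l) ^ 2 + k ^ 2)) * Real.sqrt m)
        / (8 * k ^ 2 * l ^ 2 * (k - v) * v) := by
  obtain ⟨hv0, hvk⟩ := hv
  have ha : 0 < a := lt_of_lt_of_le hb hab
  have key : ∀ t : ℝ,
      k ^ 3 * (c.1 + a * Real.cos t * (Real.cos θ) - b * Real.sin t * (Real.sin θ)) ^ 2 + (k * (d + l) ^ 2 - 4 * d * l * v) * (c.2 + a * Real.cos t * (Real.sin θ) + b * Real.sin t * (Real.cos θ)) ^ 2 + (-(2 * k * (k * d - 2 * l * v + k * l))) * (c.1 + a * Real.cos t * (Real.cos θ) - b * Real.sin t * (Real.sin θ)) * (c.2 + a * Real.cos t * (Real.sin θ) + b * Real.sin t * (Real.cos θ)) + (-(2 * k ^ 2 * l * v)) * (c.1 + a * Real.cos t * (Real.cos θ) - b * Real.sin t * (Real.sin θ)) + (2 * k * l * v * (d - l)) *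 (c.2 + a * Real.cos t * (Real.sin θ) + b * Real.sin t * (Real.cos θ)) + (k * l ^ 2 * v ^ 2) = 0 := by
    intro t
    have h1 : (c + (a * Real.cos t) • (Real.cos θ, Real.sin θ)
        + (b * Real.sin t) • (-Real.sin θ, Real.cos θ)) ∈
        {q : ℝ × ℝ | ∃ t : ℝ,
          q = c + (a * Real.cos t) • (Real.cos θ, Real.sin θ)
            + (b * Real.sin t) • (-Real.sin θ, Real.cos θ)} := ⟨t, rfl⟩
    rw [← hΨ] at h1
    simp only [Set.mem_setOf_eq, Prod.fst_add, Prod.snd_add, Prod.smul_fst, Prod.smul_snd,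
      smul_eq_mul] at h1
    linear_combination h1
  have pyth : (Real.cos θ) ^ 2 + (Real.sin θ) ^ 2 = 1 := Real.cos_sq_add_sin_sq θ
  have pyth5 : Real.cos (Real.pi / 4) ^ 2 + Real.sin (Real.pi / 4) ^ 2 = 1 :=
    Real.cos_sq_add_sin_sq _
  have hcs : Real.cos (Real.pi / 4) * Real.sin (Real.pi / 4) = 1 / 2 := by
    have h := Real.sin_two_mul (Real.pi / 4)
    rw [show 2 * (Real.pi / 4) = Real.pi / 2 by ring, Real.sin_pi_div_two] at h
    linarith
  have e1 : k ^ 3 * (c.1 + a * (Real.cos θ)) ^ 2 + (k * (d + l) ^ 2 - 4 * d * l * v) * (c.2 + a * (Real.sin θ)) ^ 2 + (-(2 * k * (k * d - 2 * l * v + k * l))) * (c.1 + a * (Real.cos θ)) * (c.2 + a * (Real.sin θ)) + (-(2 * k ^ 2 * l * v)) * (c.1 + a * (Real.cos θ)) + (2 * k * l * v * (d - l)) * (c.2 + a * (Real.sin θ)) + (k * l ^ 2 * v ^ 2) = 0 := by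
    have h := key 0
    rw [Real.cos_zero, Real.sin_zero] at h
    linear_combination h
  have e2 : k ^ 3 * (c.1 - a * (Real.cos θ)) ^ 2 + (k * (d + l) ^ 2 - 4 * d * l * v) * (c.2 - a * (Real.sin θ)) ^ 2 + (-(2 * k * (k * d - 2 * l * v + k * l))) * (c.1 - a * (Real.cos θ)) * (c.2 - a * (Real.sin θ)) + (-(2 * k ^ 2 * l * v)) * (c.1 - a * (Real.cos θ)) + (2 * k * l * v * (d - l)) * (c.2 - a * (Real.sin θ)) + (k * l ^ 2 * v ^ 2) = 0 := by
    have h := key Real.pi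
    rw [Real.cos_pi, Real.sin_pi] at h
    linear_combination h
  have e3 : k ^ 3 * (c.1 - b * (Real.sin θ)) ^ 2 + (k * (d + l) ^ 2 - 4 * d * l * v) * (c.2 + b * (Real.cos θ)) ^ 2 + (-(2 * k * (k * d - 2 * l * v + k * l))) * (c.1 - b * (Real.sin θ)) * (c.2 + b * (Real.cos θ)) + (-(2 * k ^ 2 * l * v)) * (c.1 - b * (Real.sin θ)) + (2 * k * l * v * (d - l)) * (c.2 + b * (Real.cos θ)) + (k * l ^ 2 * v ^ 2) = 0 := by
    have h := key (Real.pi / 2)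
    rw [Real.cos_pi_div_two, Real.sin_pi_div_two] at h
    linear_combination h
  have e4 : k ^ 3 * (c.1 + b * (Real.sin θ)) ^ 2 + (k * (d + l) ^ 2 - 4 * d * l * v) * (c.2 - b * (Real.cos θ)) ^ 2 + (-(2 * k * (k * d - 2 * l * v + k * l))) * (c.1 + b * (Real.sin θ)) * (c.2 - b * (Real.cos θ)) + (-(2 * k ^ 2 * l * v)) * (c.1 + b * (Real.sin θ)) + (2 * k * l * v * (d - l)) * (c.2 - b * (Real.cos θ)) + (k * l ^ 2 * v ^ 2) = 0 := by
    have h := key (-(Real.pi / 2))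
    rw [Real.cos_neg, Real.sin_neg, Real.cos_pi_div_two, Real.sin_pi_div_two] at h
    linear_combination h
  have e5 : k ^ 3 * (c.1 + a * Real.cos (Real.pi / 4) * (Real.cos θ) - b * Real.sin (Real.pi / 4) * (Real.sin θ)) ^ 2 + (k * (d + l) ^ 2 - 4 * d * l * v) * (c.2 + a * Real.cos (Real.pi / 4) * (Real.sin θ) + b * Real.sin (Real.pi / 4) * (Real.cos θ)) ^ 2 + (-(2 * k * (k * d - 2 * l * v + k * l))) * (c.1 + a * Real.cos (Real.pi / 4) * (Real.cos θ) - b * Real.sin (Real.pi / 4) * (Real.sin θ)) * (c.2 + a * Real.cos (Real.pi / 4) * (Real.sin θ) + b * Real.sin (Real.pi / 4) * (Real.cos θ)) + (-(2 * k ^ 2 * l * v)) * (c.1 + a * Real.cos (Real.pi / 4) * (Real.cos θ) - b * Real.sin (Real.pi / 4) * (Real.sin θ)) + (2 * k * l * v * (d - l)) * (c.2 + a * Real.cos (Real.pi / 4) * (Real.sin θ) + b * Real.sin (Real.pi / 4) * (Real.cos θ)) + (k * l ^ 2 * v ^ 2) = 0 :=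
    key (Real.pi / 4)
  obtain ⟨α, γ, hs, hsum, h4⟩ := ellipse_aux (k ^ 3) (-(2 * k * (k * d - 2 * l * v + k * l))) (k * (d + l) ^ 2 - 4 * d * l * v) (-(2 * k ^ 2 * l * v)) (2 * k * l * v * (d - l)) (k * l ^ 2 * v ^ 2) c.1 c.2 (Real.cos θ) (Real.sin θ)
    (Real.cos (Real.pi / 4)) (Real.sin (Real.pi / 4)) a b pyth pyth5 hcs ha.ne' hb.ne'
    e1 e2 e3 e4 e5
  clear key e1 e2 e3 e4 e5 hΨ pyth pyth5 hcs
  have h4' : 4 * (α * γ) = 16 * k ^ 2 * l ^ 2 * v * (k - v) := by linear_combination h4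
  have hkv : 0 < k - v := sub_pos.mpr hvk
  have hTpos : 0 < k ^ 3 + (k * (d + l) ^ 2 - 4 * d * l * v) := by
    nlinarith [pow_pos hk 3, mul_nonneg hk.le (sq_nonneg (d - l)),
      mul_nonneg (mul_nonneg hd hl.le) hkv.le]
  have hΔpos : 0 < 16 * k ^ 2 * l ^ 2 * v * (k - v) := by
    have := mul_pos (mul_pos (mul_pos (pow_pos hk 2) (pow_pos hl 2)) hv0) hkv
    nlinarith
  have hαγ : 0 < α * γ := by linarith
  have hsum' : 0 < α + γ := by linarith
  have hα : 0 < α := by nlinarith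
  have hγ : 0 < γ := by nlinarith
  have hb2a2 : b ^ 2 ≤ a ^ 2 := by nlinarith
  have hαγle : α ≤ γ := by nlinarith [mul_nonneg hα.le (sub_nonneg.mpr hb2a2), pow_pos hb 2]
  have hm2 : m = (γ - α) ^ 2 := by
    linear_combination hm - (α + γ + (k ^ 3 + (k * (d + l) ^ 2 - 4 * d * l * v))) * hsum + h4'
  have hsq : Real.sqrt m = γ - α := by
    rw [hm2]; exact Real.sqrt_sq (by linarith)
  rw [hsq, hm2]
  have hG : 4 * d * l * v - k * ((d + l) ^ 2 + k ^ 2) = -(α + γ) := by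
    linear_combination hsum
  have hden : 8 * k ^ 2 * l ^ 2 * (k - v) * v = 2 * (α * γ) := by
    linear_combination (-1/2 : ℝ) * h4'
  rw [hG, hden]
  have h1 : 1 + ((γ - α) ^ 2 + -(α + γ) * (γ - α)) / (2 * (α * γ)) = α / γ := by
    field_simp
    ring
  rw [h1, div_eq_div_iff (pow_ne_zero 2 ha.ne') hγ.ne']
  linear_combination -hs
end

section
/- Let l, k > 0 and d ≥ 0. Define, for v ∈ (0, k), h(v) = 1 + (m(v) + (4dlv − k((d+l)² + k²))·√(m(v))) / (8k²l²(k−v)v), where m(v) = 16l²(d²+k²)v² − 8lk(dk² + d³ + 2ld² + l²d + 2k²l)v + k²(2dl + l² + d² + k²)². Set v_ε = (1/2)·k·((d+l)² + k²)/(k² + d² + l²). Then v_ε ∈ (0, k) and h attains a strict global maximum on (0, k) at v_ε; that is, for every v ∈ (0, k) with v ≠ v_ε, h(v) < h(v_ε). (Since h(v) = b²/a² for the inscribed ellipse Ψ_v and the eccentricity is √(1 − b²/a²), this says there is a unique ellipse of minimal eccentricity inscribed in the parallelogram with vertices (0,0), (l,0), (d,k), (l+d,k).) -/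
/-!
Write `B v = k((d+l)² + k²) - 4dlv`, which is positive on `(0, k)`. Since `m = B² - 16k²l²(k-v)v`,
`h = (B - √m)/(B + √m)`, a decreasing function of `√m / B`. The identity
`((d+l)² + k²)((d-l)² + k²) m = (d² + k² - l²)² B² + 4l²k² (2(k² + d² + l²)v - k((d+l)² + k²))²`
shows that `m / B²` is smallest exactly where the last square vanishes, i.e. at `v = v_ε`.
-/

theorem sub_div_add_lt_sub_div_add {a b s t : ℝ} (ha : 0 < a) (hb : 0 < b) (hs : 0 ≤ s)
    (ht : 0 ≤ t) (h : a * s < b * t) : (a - t) / (a + t) < (b - s) / (b + s) := by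
  rw [div_lt_div_iff₀ (by positivity) (by positivity)]
  linarith

theorem one_add_sq_sub_mul_div_eq {b s p : ℝ} (hp : p ≠ 0) (hbs : b + s ≠ 0)
    (hs : s ^ 2 = b ^ 2 - 2 * p) : 1 + (s ^ 2 - b * s) / p = (b - s) / (b + s) := by
  field_simp
  linear_combination s * hs

namespace ParallelogramEllipse

def m (l k d v : ℝ) : ℝ :=
  16 * l ^ 2 * (d ^ 2 + k ^ 2) * v ^ 2
    - 8 * l * k * (d * k ^ 2 + d ^ 3 + 2 * l * d ^ 2 + l ^ 2 * d + 2 * k ^ 2 * l) * v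
    + k ^ 2 * (2 * d * l + l ^ 2 + d ^ 2 + k ^ 2) ^ 2

def B (l k d v : ℝ) : ℝ := k * ((d + l) ^ 2 + k ^ 2) - 4 * d * l * v

variable {l k d v : ℝ}

theorem m_eq_B_sq_sub : m l k d v = B l k d v ^ 2 - 16 * k ^ 2 * l ^ 2 * (k - v) * v := by
  unfold m B; ring

theorem mul_m_eq : ((d + l) ^ 2 + k ^ 2) * ((d - l) ^ 2 + k ^ 2) * m l k d v =
    (d ^ 2 + k ^ 2 - l ^ 2) ^ 2 * B l k d v ^ 2
      + 4 * l ^ 2 * k ^ 2 * (2 * (k ^ 2 + d ^ 2 + l ^ 2) * v - k * ((d + l) ^ 2 + k ^ 2)) ^ 2 := by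
  unfold m B; ring

theorem m_nonneg (hk : k ≠ 0) : 0 ≤ m l k d v := by
  have hCQ : 0 < ((d + l) ^ 2 + k ^ 2) * ((d - l) ^ 2 + k ^ 2) := by positivity
  exact nonneg_of_mul_nonneg_right (mul_m_eq ▸ by positivity) hCQ

theorem B_pos (hl : 0 ≤ l) (hk : 0 < k) (hd : 0 ≤ d) (hv : v ≤ k) : 0 < B l k d v := by
  unfold B
  nlinarith [mul_le_mul_of_nonneg_left hv (mul_nonneg hd hl), sq_nonneg (d - l), pow_pos hk 3]

theorem B_sq_mul_m_lt (hl : l ≠ 0) (hk : k ≠ 0) {v₀ : ℝ}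
    (h₀ : 2 * (k ^ 2 + d ^ 2 + l ^ 2) * v₀ = k * ((d + l) ^ 2 + k ^ 2)) (hv : v ≠ v₀) :
    B l k d v ^ 2 * m l k d v₀ < B l k d v₀ ^ 2 * m l k d v := by
  have hB₀ : (k ^ 2 + d ^ 2 + l ^ 2) * B l k d v₀
      = k * ((d + l) ^ 2 + k ^ 2) * ((d - l) ^ 2 + k ^ 2) := by
    unfold B; linear_combination (-2 * d * l) * h₀
  have hB₀ne : B l k d v₀ ≠ 0 := by
    rintro h
    have : k * ((d + l) ^ 2 + k ^ 2) * ((d - l) ^ 2 + k ^ 2) ≠ 0 := by positivity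
    simp [← hB₀, h] at this
  have hT : 2 * (k ^ 2 + d ^ 2 + l ^ 2) * v - k * ((d + l) ^ 2 + k ^ 2) ≠ 0 := by
    rw [← h₀, ← mul_sub]
    exact mul_ne_zero (by positivity) (sub_ne_zero.2 hv)
  have hm := mul_m_eq (l := l) (k := k) (d := d) (v := v)
  have hm₀ := mul_m_eq (l := l) (k := k) (d := d) (v := v₀)
  rw [h₀, sub_self] at hm₀
  refine lt_of_mul_lt_mul_left (a := ((d + l) ^ 2 + k ^ 2) * ((d - l) ^ 2 + k ^ 2)) ?_
    (by positivity)
  have hpos : 0 < B l k d v₀ ^ 2 * (4 * l ^ 2 * k ^ 2 *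
      (2 * (k ^ 2 + d ^ 2 + l ^ 2) * v - k * ((d + l) ^ 2 + k ^ 2)) ^ 2) := by positivity
  linear_combination hpos - B l k d v₀ ^ 2 * hm + B l k d v ^ 2 * hm₀

theorem mem_Ioo_of_two_mul_eq (hk : 0 < k) {v₀ : ℝ}
    (h₀ : 2 * (k ^ 2 + d ^ 2 + l ^ 2) * v₀ = k * ((d + l) ^ 2 + k ^ 2)) : v₀ ∈ Set.Ioo 0 k := by
  have hN : 0 < k ^ 2 + d ^ 2 + l ^ 2 := by positivity
  have hC : 0 < k * ((d + l) ^ 2 + k ^ 2) := by positivity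
  have hQ : 0 < k * ((d - l) ^ 2 + k ^ 2) := by positivity
  constructor <;> nlinarith

theorem axis_ratio_sq_eq (hl : 0 < l) (hk : 0 < k) (hd : 0 ≤ d) (hv : v ∈ Set.Ioo 0 k) :
    1 + (m l k d v + (4 * d * l * v - k * ((d + l) ^ 2 + k ^ 2)) * √(m l k d v))
        / (8 * k ^ 2 * l ^ 2 * (k - v) * v)
      = (B l k d v - √(m l k d v)) / (B l k d v + √(m l k d v)) := by
  obtain ⟨hv₀, hvk⟩ := hv
  have hB := B_pos hl.le hk hd hvk.le
  have hp : 8 * k ^ 2 * l ^ 2 * (k - v) * v ≠ 0 := by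
    have := sub_pos.2 hvk; positivity
  have hs := Real.sq_sqrt (m_nonneg (l := l) (d := d) (v := v) hk.ne')
  rw [← one_add_sq_sub_mul_div_eq hp (by positivity) (by rw [hs, m_eq_B_sq_sub]; ring), hs]
  unfold B; ring

theorem B_mul_sqrt_m_lt (hl : 0 < l) (hk : 0 < k) (hd : 0 ≤ d) {v₀ : ℝ}
    (h₀ : 2 * (k ^ 2 + d ^ 2 + l ^ 2) * v₀ = k * ((d + l) ^ 2 + k ^ 2)) (hv : v ≠ v₀) :
    B l k d v * √(m l k d v₀) < B l k d v₀ * √(m l k d v) := by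
  have hB₀ := B_pos hl.le hk hd (mem_Ioo_of_two_mul_eq hk h₀).2.le
  refine lt_of_pow_lt_pow_left₀ 2 (by positivity) ?_
  rw [mul_pow, mul_pow, Real.sq_sqrt (m_nonneg hk.ne'), Real.sq_sqrt (m_nonneg hk.ne')]
  exact B_sq_mul_m_lt hl.ne' hk.ne' h₀ hv

end ParallelogramEllipse

theorem stmt_6 (l k d : ℝ) (hl : 0 < l) (hk : 0 < k) (hd : 0 ≤ d)
    (m h : ℝ → ℝ)
    (hm : ∀ v, m v = 16 * l ^ 2 * (d ^ 2 + k ^ 2) * v ^ 2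
      - 8 * l * k * (d * k ^ 2 + d ^ 3 + 2 * l * d ^ 2 + l ^ 2 * d + 2 * k ^ 2 * l) * v
      + k ^ 2 * (2 * d * l + l ^ 2 + d ^ 2 + k ^ 2) ^ 2)
    (hh : ∀ v ∈ Set.Ioo (0 : ℝ) k,
      h v = 1 + (m v + (4 * d * l * v - k * ((d + l) ^ 2 + k ^ 2)) * Real.sqrt (m v))
        / (8 * k ^ 2 * l ^ 2 * (k - v) * v))
    (vε : ℝ) (hvε : vε = 1 / 2 * k * ((d + l) ^ 2 + k ^ 2) / (k ^ 2 + d ^ 2 + l ^ 2)) :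
    vε ∈ Set.Ioo (0 : ℝ) k ∧
    ∀ v ∈ Set.Ioo (0 : ℝ) k, v ≠ vε → h v < h vε := by
  obtain rfl : m = fun v ↦ ParallelogramEllipse.m l k d v := funext hm
  have hvε₀ : 2 * (k ^ 2 + d ^ 2 + l ^ 2) * vε = k * ((d + l) ^ 2 + k ^ 2) := by
    rw [hvε]; field_simp
  have hvε_mem := ParallelogramEllipse.mem_Ioo_of_two_mul_eq hk hvε₀
  refine ⟨hvε_mem, fun v hv hne ↦ ?_⟩
  open ParallelogramEllipse in
  calc h v = (B l k d v - √(m l k d v)) / (B l k d v + √(m l k d v)) :=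
        (hh v hv).trans (axis_ratio_sq_eq hl hk hd hv)
    _ < (B l k d vε - √(m l k d vε)) / (B l k d vε + √(m l k d vε)) :=
        sub_div_add_lt_sub_div_add (B_pos hl.le hk hd hv.2.le)
          (B_pos hl.le hk hd hvε_mem.2.le) (Real.sqrt_nonneg _) (Real.sqrt_nonneg _)
          (B_mul_sqrt_m_lt hl hk hd hvε₀ hne)
    _ = h vε := ((hh vε hvε_mem).trans (axis_ratio_sq_eq hl hk hd hvε_mem)).symm
end

section
/- Let l, k > 0 and d ≥ 0. Define, for v ∈ (0, k), h(v) = 1 + (m(v) + (4dlv − k((d+l)² + k²))·√(m(v))) / (8k²l²(k−v)v), where m(v) = 16l²(d²+k²)v² − 8lk(dk² + d³ + 2ld² + l²d + 2k²l)v + k²(2dl + l² + d² + k²)². Then h(v) tends to 0 as v tends to 0 from the right, and h(v) tends to 0 as v tends to k from the left. -/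
/-!
With `A(v) = k((d+l)² + k²) - 4dlv` one has the identity `A(v)² - m(v) = 16k²l²v(k-v)`, which
turns `h` into the relative gap `(A - √m) / (A + √m)`. At both endpoints `v = 0` and `v = k` the
right-hand side of the identity vanishes, so `m = A²` there with `A > 0`, and the gap tends to `0`.
-/

open Filter Topology

theorem one_add_sq_sub_mul_div_eq_sub_div_add {A s D : ℝ} (hD : D ≠ 0) (hAs : A + s ≠ 0)
    (hdiff : A ^ 2 - s ^ 2 = 2 * D) :
    1 + (s ^ 2 - A * s) / D = (A - s) / (A + s) := by
  rw [one_add_div hD, div_eq_div_iff hD hAs]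
  linear_combination (-s) * hdiff

theorem Filter.Tendsto.sub_sqrt_div_add_sqrt {α : Type*} {L : Filter α} {A m : α → ℝ} {a : ℝ}
    (ha : 0 < a) (hA : Tendsto A L (𝓝 a)) (hm : Tendsto m L (𝓝 (a ^ 2))) :
    Tendsto (fun x => (A x - √(m x)) / (A x + √(m x))) L (𝓝 0) := by
  have hs : Tendsto (fun x => √(m x)) L (𝓝 a) := by
    simpa only [Real.sqrt_sq ha.le] using hm.sqrt
  simpa only [sub_self, zero_div, Pi.div_def] using (hA.sub hs).div (hA.add hs) (by positivity)

theorem tendsto_one_add_sq_sub_mul_sqrt_div {α : Type*} {L : Filter α} {A m D h : α → ℝ} {a : ℝ}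
    (ha : 0 < a) (hA : Tendsto A L (𝓝 a)) (hm : Tendsto m L (𝓝 (a ^ 2)))
    (hdiff : ∀ x, A x ^ 2 - m x = 2 * D x) (hD : ∀ᶠ x in L, D x ≠ 0)
    (hh : ∀ᶠ x in L, h x = 1 + (m x - A x * √(m x)) / D x) :
    Tendsto h L (𝓝 0) := by
  refine (hA.sub_sqrt_div_add_sqrt ha hm).congr' ?_
  filter_upwards [hh, hD, hA.eventually_const_lt ha, hm.eventually_const_lt (by positivity)]
    with x hhx hDx hAx hmx
  have hsq : √(m x) ^ 2 = m x := Real.sq_sqrt hmx.le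
  have hgap := one_add_sq_sub_mul_div_eq_sub_div_add (A := A x) (s := √(m x)) hDx
    (by positivity) (by rw [hsq, hdiff])
  rw [hhx, ← hgap, hsq]

theorem stmt_7_general (l k d : ℝ) (hl : 0 < l) (hk : 0 < k)
    (m h : ℝ → ℝ)
    (hm : ∀ v, m v = 16 * l ^ 2 * (d ^ 2 + k ^ 2) * v ^ 2
      - 8 * l * k * (d * k ^ 2 + d ^ 3 + 2 * l * d ^ 2 + l ^ 2 * d + 2 * k ^ 2 * l) * v
      + k ^ 2 * (2 * d * l + l ^ 2 + d ^ 2 + k ^ 2) ^ 2)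
    (hh : ∀ v ∈ Set.Ioo (0 : ℝ) k,
      h v = 1 + (m v + (4 * d * l * v - k * ((d + l) ^ 2 + k ^ 2)) * Real.sqrt (m v))
        / (8 * k ^ 2 * l ^ 2 * (k - v) * v)) :
    Tendsto h (nhdsWithin 0 (Set.Ioi 0)) (nhds 0) ∧
    Tendsto h (nhdsWithin k (Set.Iio k)) (nhds 0) := by
  set A : ℝ → ℝ := fun v => k * ((d + l) ^ 2 + k ^ 2) - 4 * d * l * v
  have hAcont : Continuous A := by fun_prop
  have hmcont : Continuous m := by rw [funext hm]; fun_prop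
  have endpoint {c a : ℝ} (ha : 0 < a) (hAc : A c = a) (hmc : m c = a ^ 2) {L : Filter ℝ}
      (hL : L ≤ 𝓝 c) (hIoo : Set.Ioo 0 k ∈ L) : Tendsto h L (𝓝 0) := by
    refine tendsto_one_add_sq_sub_mul_sqrt_div ha ((hAcont.tendsto' c a hAc).mono_left hL)
      ((hmcont.tendsto' c _ hmc).mono_left hL) (D := fun v => 8 * k ^ 2 * l ^ 2 * (k - v) * v)
      (fun v => by simp only [A, hm]; ring) ?_ ?_
    · filter_upwards [hIoo] with v ⟨hv0, hvk⟩
      have : 0 < k - v := sub_pos.2 hvk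
      positivity
    · filter_upwards [hIoo] with v hv
      rw [hh v hv]
      ring
  constructor
  · exact endpoint (a := k * ((d + l) ^ 2 + k ^ 2)) (by positivity) (by simp only [A]; ring)
      (by rw [hm]; ring) nhdsWithin_le_nhds (Ioo_mem_nhdsGT hk)
  · exact endpoint (a := k * ((d - l) ^ 2 + k ^ 2)) (by positivity) (by simp only [A]; ring)
      (by rw [hm]; ring) nhdsWithin_le_nhds (Ioo_mem_nhdsLT hk)

theorem stmt_7 (l k d : ℝ) (hl : 0 < l) (hk : 0 < k) (hd : 0 ≤ d)
    (m h : ℝ → ℝ)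
    (hm : ∀ v, m v = 16 * l ^ 2 * (d ^ 2 + k ^ 2) * v ^ 2
      - 8 * l * k * (d * k ^ 2 + d ^ 3 + 2 * l * d ^ 2 + l ^ 2 * d + 2 * k ^ 2 * l) * v
      + k ^ 2 * (2 * d * l + l ^ 2 + d ^ 2 + k ^ 2) ^ 2)
    (hh : ∀ v ∈ Set.Ioo (0 : ℝ) k,
      h v = 1 + (m v + (4 * d * l * v - k * ((d + l) ^ 2 + k ^ 2)) * Real.sqrt (m v))
        / (8 * k ^ 2 * l ^ 2 * (k - v) * v)) :
    Tendsto h (nhdsWithin 0 (Set.Ioi 0)) (nhds 0) ∧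
    Tendsto h (nhdsWithin k (Set.Iio k)) (nhds 0) :=
  stmt_7_general l k d hl hk m h hm hh
end

section
/- Let l, k > 0 and d ≥ 0, and assume l² ≥ d² + k². Define h(v) = 1 + (m(v) + (4dlv − k((d+l)² + k²))·√(m(v))) / (8k²l²(k−v)v), where m(v) = 16l²(d²+k²)v² − 8lk(dk² + d³ + 2ld² + l²d + 2k²l)v + k²(2dl + l² + d² + k²)², and let v_ε = (1/2)·k·((d+l)² + k²)/(k² + d² + l²). With G = (d+l)² + k², H = (d−l)² + k² and I = l² − d² − k², one has h(v_ε) = 1 + I·(I − √(G·H))/(2k²l²); moreover h(v_ε) < 1 if I > 0, and h(v_ε) = 1 if I = 0. -/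
/-!
At `v_ε = k G / (2S)`, with `S = k² + d² + l² = (G + H) / 2`, one has
`k - v_ε = k H / (2S)`, and every ingredient of `h` collapses to a multiple of `G H`: the quadratic becomes
`m(v_ε) = (k I / S)² G H`, the linear coefficient `-k G H / S`, and the denominator
`2 k⁴ l² G H / S²`. Since `I ≥ 0` the square root is `(k I / S) √(G H)`, and the common factor
`G H` cancels. The sign claims follow from the identity `G H = I² + 4 k² l²`, which gives
`I < √(G H)`.
-/

open Real Set

section MinimalEccentricity

variable {l k d : ℝ}

/- The paper's `m`, `h` and `v_ε`. -/
def minEccQuad (l k d v : ℝ) : ℝ :=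
  16 * l ^ 2 * (d ^ 2 + k ^ 2) * v ^ 2
    - 8 * l * k * (d * k ^ 2 + d ^ 3 + 2 * l * d ^ 2 + l ^ 2 * d + 2 * k ^ 2 * l) * v
    + k ^ 2 * (2 * d * l + l ^ 2 + d ^ 2 + k ^ 2) ^ 2

noncomputable def minEccRatio (l k d v : ℝ) : ℝ :=
  1 + (minEccQuad l k d v + (4 * d * l * v - k * ((d + l) ^ 2 + k ^ 2)) * √(minEccQuad l k d v))
    / (8 * k ^ 2 * l ^ 2 * (k - v) * v)

noncomputable def minEccPoint (l k d : ℝ) : ℝ :=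
  1 / 2 * k * ((d + l) ^ 2 + k ^ 2) / (k ^ 2 + d ^ 2 + l ^ 2)

lemma mul_sq_add_sq_eq_sq_add (l k d : ℝ) :
    ((d + l) ^ 2 + k ^ 2) * ((d - l) ^ 2 + k ^ 2)
      = (l ^ 2 - d ^ 2 - k ^ 2) ^ 2 + 4 * k ^ 2 * l ^ 2 := by
  ring

lemma sub_minEccPoint (hk : 0 < k) :
    k - minEccPoint l k d = k * ((d - l) ^ 2 + k ^ 2) / (2 * (k ^ 2 + d ^ 2 + l ^ 2)) := by
  unfold minEccPoint
  field_simp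
  ring

lemma minEccPoint_mem_Ioo (hk : 0 < k) : minEccPoint l k d ∈ Ioo 0 k := by
  refine ⟨by unfold minEccPoint; positivity, ?_⟩
  have : 0 < k - minEccPoint l k d := by rw [sub_minEccPoint hk]; positivity
  linarith

lemma minEccQuad_minEccPoint (hk : 0 < k) :
    minEccQuad l k d (minEccPoint l k d)
      = (k * (l ^ 2 - d ^ 2 - k ^ 2) / (k ^ 2 + d ^ 2 + l ^ 2)) ^ 2
        * (((d + l) ^ 2 + k ^ 2) * ((d - l) ^ 2 + k ^ 2)) := by
  unfold minEccQuad minEccPoint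
  field_simp
  ring

lemma sqrt_minEccQuad_minEccPoint (hk : 0 < k) (hge : d ^ 2 + k ^ 2 ≤ l ^ 2) :
    √(minEccQuad l k d (minEccPoint l k d))
      = k * (l ^ 2 - d ^ 2 - k ^ 2) / (k ^ 2 + d ^ 2 + l ^ 2)
        * √(((d + l) ^ 2 + k ^ 2) * ((d - l) ^ 2 + k ^ 2)) := by
  have hI : 0 ≤ l ^ 2 - d ^ 2 - k ^ 2 := by linarith
  rw [minEccQuad_minEccPoint hk, sqrt_mul (sq_nonneg _), sqrt_sq (by positivity)]

lemma minEccRatio_minEccPoint (hl : 0 < l) (hk : 0 < k) (hge : d ^ 2 + k ^ 2 ≤ l ^ 2) :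
    minEccRatio l k d (minEccPoint l k d) = 1 + (l ^ 2 - d ^ 2 - k ^ 2)
      * (l ^ 2 - d ^ 2 - k ^ 2 - √(((d + l) ^ 2 + k ^ 2) * ((d - l) ^ 2 + k ^ 2)))
      / (2 * k ^ 2 * l ^ 2) := by
  set S := k ^ 2 + d ^ 2 + l ^ 2
  set GH := ((d + l) ^ 2 + k ^ 2) * ((d - l) ^ 2 + k ^ 2)
  have hS : 0 < S := by positivity
  have hGH : 0 < GH := by positivity
  have hlinear : 4 * d * l * minEccPoint l k d - k * ((d + l) ^ 2 + k ^ 2) = -(k * GH / S) := by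
    unfold minEccPoint
    field_simp
    ring
  have hdenom : 8 * k ^ 2 * l ^ 2 * (k - minEccPoint l k d) * minEccPoint l k d
      = 2 * k ^ 4 * l ^ 2 * GH / S ^ 2 := by
    rw [sub_minEccPoint hk]
    unfold minEccPoint
    field_simp
    ring
  unfold minEccRatio
  rw [sqrt_minEccQuad_minEccPoint hk hge, minEccQuad_minEccPoint hk, hlinear, hdenom]
  field_simp
  ring

lemma minEccRatio_minEccPoint_lt_one (hl : 0 < l) (hk : 0 < k) (hI : d ^ 2 + k ^ 2 < l ^ 2) :
    minEccRatio l k d (minEccPoint l k d) < 1 := by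
  rw [minEccRatio_minEccPoint hl hk hI.le, add_lt_iff_neg_left]
  have hsqrt : l ^ 2 - d ^ 2 - k ^ 2 < √(((d + l) ^ 2 + k ^ 2) * ((d - l) ^ 2 + k ^ 2)) := by
    apply lt_sqrt_of_sq_lt
    rw [mul_sq_add_sq_eq_sq_add]
    have : 0 < 4 * k ^ 2 * l ^ 2 := by positivity
    linarith
  apply div_neg_of_neg_of_pos _ (by positivity)
  exact mul_neg_of_pos_of_neg (by linarith) (by linarith)

lemma minEccRatio_minEccPoint_eq_one (hl : 0 < l) (hk : 0 < k) (hI : d ^ 2 + k ^ 2 = l ^ 2) :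
    minEccRatio l k d (minEccPoint l k d) = 1 := by
  rw [minEccRatio_minEccPoint hl hk hI.le, show l ^ 2 - d ^ 2 - k ^ 2 = 0 by linarith]
  ring

end MinimalEccentricity

theorem stmt_8_general (l k d : ℝ) (hl : 0 < l) (hk : 0 < k)
    (hge : d ^ 2 + k ^ 2 ≤ l ^ 2)
    (m h : ℝ → ℝ)
    (hm : ∀ v, m v = 16 * l ^ 2 * (d ^ 2 + k ^ 2) * v ^ 2
      - 8 * l * k * (d * k ^ 2 + d ^ 3 + 2 * l * d ^ 2 + l ^ 2 * d + 2 * k ^ 2 * l) * v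
      + k ^ 2 * (2 * d * l + l ^ 2 + d ^ 2 + k ^ 2) ^ 2)
    (hh : ∀ v ∈ Set.Ioo (0 : ℝ) k,
      h v = 1 + (m v + (4 * d * l * v - k * ((d + l) ^ 2 + k ^ 2)) * Real.sqrt (m v))
        / (8 * k ^ 2 * l ^ 2 * (k - v) * v))
    (vε G H I : ℝ)
    (hvε : vε = 1 / 2 * k * ((d + l) ^ 2 + k ^ 2) / (k ^ 2 + d ^ 2 + l ^ 2))
    (hG : G = (d + l) ^ 2 + k ^ 2) (hH : H = (d - l) ^ 2 + k ^ 2)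
    (hI : I = l ^ 2 - d ^ 2 - k ^ 2) :
    h vε = 1 + I * (I - Real.sqrt (G * H)) / (2 * k ^ 2 * l ^ 2) ∧
    (0 < I → h vε < 1) ∧
    (I = 0 → h vε = 1) := by
  have hvε' : vε = minEccPoint l k d := hvε
  have hhvε : h vε = minEccRatio l k d (minEccPoint l k d) := by
    rw [hh vε (hvε' ▸ minEccPoint_mem_Ioo hk), funext hm, hvε']
    rfl
  subst hG hH hI
  refine ⟨hhvε ▸ minEccRatio_minEccPoint hl hk hge, fun hpos => ?_, fun hzero => ?_⟩
  · exact hhvε ▸ minEccRatio_minEccPoint_lt_one hl hk (by linarith)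
  · exact hhvε ▸ minEccRatio_minEccPoint_eq_one hl hk (by linarith)

theorem stmt_8 (l k d : ℝ) (hl : 0 < l) (hk : 0 < k) (hd : 0 ≤ d)
    (hge : d ^ 2 + k ^ 2 ≤ l ^ 2)
    (m h : ℝ → ℝ)
    (hm : ∀ v, m v = 16 * l ^ 2 * (d ^ 2 + k ^ 2) * v ^ 2
      - 8 * l * k * (d * k ^ 2 + d ^ 3 + 2 * l * d ^ 2 + l ^ 2 * d + 2 * k ^ 2 * l) * v
      + k ^ 2 * (2 * d * l + l ^ 2 + d ^ 2 + k ^ 2) ^ 2)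
    (hh : ∀ v ∈ Set.Ioo (0 : ℝ) k,
      h v = 1 + (m v + (4 * d * l * v - k * ((d + l) ^ 2 + k ^ 2)) * Real.sqrt (m v))
        / (8 * k ^ 2 * l ^ 2 * (k - v) * v))
    (vε G H I : ℝ)
    (hvε : vε = 1 / 2 * k * ((d + l) ^ 2 + k ^ 2) / (k ^ 2 + d ^ 2 + l ^ 2))
    (hG : G = (d + l) ^ 2 + k ^ 2) (hH : H = (d - l) ^ 2 + k ^ 2)
    (hI : I = l ^ 2 - d ^ 2 - k ^ 2) :
    h vε = 1 + I * (I - Real.sqrt (G * H)) / (2 * k ^ 2 * l ^ 2) ∧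
    (0 < I → h vε < 1) ∧
    (I = 0 → h vε = 1) :=
  stmt_8_general l k d hl hk hge m h hm hh vε G H I hvε hG hH hI
end

section
/- Let l, k > 0 and d ≥ 0 with l² > d² + k². Let v_ε = (1/2)·k·((d+l)² + k²)/(k² + d² + l²) and let h(v_ε) = 1 + I·(I − √(G·H))/(2k²l²), where G = (d+l)² + k², H = (d−l)² + k², I = l² − d² − k². Then 2·arctan(√(h(v_ε))) = arctan(2kl/I). (Interpretation: √(h(v_ε)) = b/a for the unique minimal-eccentricity ellipse E_I inscribed in the parallelogram D with vertices (0,0), (l,0), (d,k), (l+d,k); θ = arctan(b/a) is the acute angle between an equal conjugate diameter of E_I and its major axis, so 2θ is the smallest nonnegative angle between the equal conjugate diameters of E_I, while arctan(2kl/I) is the smallest nonnegative angle between the diagonals of D. Thus the smallest nonnegative angle between equal conjugate diameters of E_I equals the smallest nonnegative angle between the diagonals of D.) -/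
/-!
With `S = √(G H) = √(I² + (2kl)²)` one has `h(v_ε) = ((S - I) / (2kl))²`, so `√h(v_ε) = (S - I) / (2kl)`,
which is the tangent half-angle formula for `tan (ψ / 2)` where `tan ψ = 2kl / I`.
-/

open Real

lemma sq_sqrt_sq_add_sq_sub_div (a b : ℝ) (hb : b ≠ 0) :
    ((√(a ^ 2 + b ^ 2) - a) / b) ^ 2 = 1 + 2 * a * (a - √(a ^ 2 + b ^ 2)) / b ^ 2 := by
  have hS : √(a ^ 2 + b ^ 2) ^ 2 = a ^ 2 + b ^ 2 := sq_sqrt (by positivity)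
  field_simp
  linear_combination hS

theorem two_mul_arctan_sqrt_sq_add_sq_sub_div {a : ℝ} (ha : 0 < a) (b : ℝ) :
    2 * arctan ((√(a ^ 2 + b ^ 2) - a) / b) = arctan (b / a) := by
  rcases eq_or_ne b 0 with rfl | hb
  · simp
  set S := √(a ^ 2 + b ^ 2)
  have hS : S ^ 2 = a ^ 2 + b ^ 2 := sq_sqrt (by positivity)
  have haS : a < S := (lt_sqrt ha.le).2 (by nlinarith [sq_pos_of_ne_zero hb])
  set t := (S - a) / b
  have h_one_sub : 1 - t * t = 2 * a * (S - a) / b ^ 2 := by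
    simp only [t]
    field_simp
    linear_combination -hS
  have ht : t * t < 1 := by
    have : 0 < 2 * a * (S - a) / b ^ 2 := by
      have := sub_pos.2 haS
      positivity
    linarith
  rw [two_mul, arctan_add ht, h_one_sub]
  congr 1
  have : S - a ≠ 0 := (sub_pos.2 haS).ne'
  simp only [t]
  field_simp
  ring

theorem stmt_9_general (l k d : ℝ) (hl : 0 < l) (hk : 0 < k)
    (hlt : d ^ 2 + k ^ 2 < l ^ 2)
    (G H I hvε : ℝ)
    (hG : G = (d + l) ^ 2 + k ^ 2) (hH : H = (d - l) ^ 2 + k ^ 2)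
    (hI : I = l ^ 2 - d ^ 2 - k ^ 2)
    (hhvε : hvε = 1 + I * (I - Real.sqrt (G * H)) / (2 * k ^ 2 * l ^ 2)) :
    2 * Real.arctan (Real.sqrt hvε) = Real.arctan (2 * k * l / I) := by
  have hI_pos : 0 < I := by rw [hI]; linarith
  have hkl : 0 < 2 * k * l := by positivity
  have hGH : G * H = I ^ 2 + (2 * k * l) ^ 2 := by subst hG hH hI; ring
  have h_sq : hvε = ((√(I ^ 2 + (2 * k * l) ^ 2) - I) / (2 * k * l)) ^ 2 := by
    rw [sq_sqrt_sq_add_sq_sub_div _ _ hkl.ne', hhvε, hGH]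
    field_simp
  have h_nonneg : 0 ≤ (√(I ^ 2 + (2 * k * l) ^ 2) - I) / (2 * k * l) :=
    div_nonneg (sub_nonneg.2 (le_sqrt_of_sq_le (by nlinarith))) hkl.le
  rw [h_sq, sqrt_sq h_nonneg, two_mul_arctan_sqrt_sq_add_sq_sub_div hI_pos]

theorem stmt_9 (l k d : ℝ) (hl : 0 < l) (hk : 0 < k) (hd : 0 ≤ d)
    (hlt : d ^ 2 + k ^ 2 < l ^ 2)
    (G H I hvε : ℝ)
    (hG : G = (d + l) ^ 2 + k ^ 2) (hH : H = (d - l) ^ 2 + k ^ 2)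
    (hI : I = l ^ 2 - d ^ 2 - k ^ 2)
    (hhvε : hvε = 1 + I * (I - Real.sqrt (G * H)) / (2 * k ^ 2 * l ^ 2)) :
    2 * Real.arctan (Real.sqrt hvε) = Real.arctan (2 * k * l / I) :=
  stmt_9_general l k d hl hk hlt G H I hvε hG hH hI hhvε
end

section
/- Let l, k > 0 and d ≥ 0 with l² = d² + k² (so the parallelogram D with vertices O=(0,0), P=(l,0), Q=(d,k), R=(l+d,k) is a rhombus). Let v_ε = (1/2)·k·((d+l)² + k²)/(k² + d² + l²) and h(v) = 1 + (m(v) + (4dlv − k((d+l)² + k²))·√(m(v))) / (8k²l²(k−v)v) with m(v) = 16l²(d²+k²)v² − 8lk(dk² + d³ + 2ld² + l²d + 2k²l)v + k²(2dl + l² + d² + k²)². Then h(v_ε) = 1 (so the unique minimal-eccentricity inscribed ellipse is a circle), and the diagonals OR and PQ of D are perpendicular: (l+d)·(d−l) + k·k = 0. -/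
/-!
When `l² = d² + k²` the discriminant `m` is a perfect square, `m v = 4 l² (2 l v - k (d + l))²`,
and `v_ε` simplifies to `k (d + l) / (2 l)`, its double root. Hence `√(m v_ε) = 0` and
`h v_ε = 1`. Perpendicularity of the diagonals is the rhombus identity itself.
-/

lemma rhombus_discriminant_eq_sq {l k d : ℝ} (hrhombus : l ^ 2 = d ^ 2 + k ^ 2) (v : ℝ) :
    16 * l ^ 2 * (d ^ 2 + k ^ 2) * v ^ 2
      - 8 * l * k * (d * k ^ 2 + d ^ 3 + 2 * l * d ^ 2 + l ^ 2 * d + 2 * k ^ 2 * l) * v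
      + k ^ 2 * (2 * d * l + l ^ 2 + d ^ 2 + k ^ 2) ^ 2
      = 4 * l ^ 2 * (2 * l * v - k * (d + l)) ^ 2 := by
  linear_combination (-(16 * l ^ 2 * v ^ 2 - 8 * l * k * v * (d + 2 * l)
    + k ^ 2 * (4 * d * l + 3 * l ^ 2 + d ^ 2 + k ^ 2))) * hrhombus

lemma rhombus_two_mul_vEps {l k d : ℝ} (hl : 0 < l) (hrhombus : l ^ 2 = d ^ 2 + k ^ 2) :
    2 * l * (1 / 2 * k * ((d + l) ^ 2 + k ^ 2) / (k ^ 2 + d ^ 2 + l ^ 2)) = k * (d + l) := by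
  have hden : k ^ 2 + d ^ 2 + l ^ 2 ≠ 0 := by positivity
  field_simp
  linear_combination (k * d) * hrhombus

lemma vEps_mem_Ioo {l k d : ℝ} (hk : 0 < k) :
    1 / 2 * k * ((d + l) ^ 2 + k ^ 2) / (k ^ 2 + d ^ 2 + l ^ 2) ∈ Set.Ioo 0 k := by
  have hden : 0 < k ^ 2 + d ^ 2 + l ^ 2 := by positivity
  refine ⟨by positivity, ?_⟩
  rw [div_lt_iff₀ hden]
  have hgap : 0 < k * ((d - l) ^ 2 + k ^ 2) := by positivity
  linarith

theorem stmt_10_general (l k d : ℝ) (hl : 0 < l) (hk : 0 < k)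
    (hrhombus : l ^ 2 = d ^ 2 + k ^ 2)
    (m h : ℝ → ℝ)
    (hm : ∀ v, m v = 16 * l ^ 2 * (d ^ 2 + k ^ 2) * v ^ 2
      - 8 * l * k * (d * k ^ 2 + d ^ 3 + 2 * l * d ^ 2 + l ^ 2 * d + 2 * k ^ 2 * l) * v
      + k ^ 2 * (2 * d * l + l ^ 2 + d ^ 2 + k ^ 2) ^ 2)
    (hh : ∀ v ∈ Set.Ioo (0 : ℝ) k,
      h v = 1 + (m v + (4 * d * l * v - k * ((d + l) ^ 2 + k ^ 2)) * Real.sqrt (m v))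
        / (8 * k ^ 2 * l ^ 2 * (k - v) * v))
    (vε : ℝ) (hvε : vε = 1 / 2 * k * ((d + l) ^ 2 + k ^ 2) / (k ^ 2 + d ^ 2 + l ^ 2)) :
    h vε = 1 ∧ (l + d) * (d - l) + k * k = 0 := by
  have hm_zero : m vε = 0 := by
    rw [hm, rhombus_discriminant_eq_sq hrhombus, hvε, rhombus_two_mul_vEps hl hrhombus]
    ring
  refine ⟨?_, by linear_combination -hrhombus⟩
  rw [hh vε (hvε ▸ vEps_mem_Ioo hk), hm_zero, Real.sqrt_zero]
  simp

theorem stmt_10 (l k d : ℝ) (hl : 0 < l) (hk : 0 < k) (hd : 0 ≤ d)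
    (hrhombus : l ^ 2 = d ^ 2 + k ^ 2)
    (m h : ℝ → ℝ)
    (hm : ∀ v, m v = 16 * l ^ 2 * (d ^ 2 + k ^ 2) * v ^ 2
      - 8 * l * k * (d * k ^ 2 + d ^ 3 + 2 * l * d ^ 2 + l ^ 2 * d + 2 * k ^ 2 * l) * v
      + k ^ 2 * (2 * d * l + l ^ 2 + d ^ 2 + k ^ 2) ^ 2)
    (hh : ∀ v ∈ Set.Ioo (0 : ℝ) k,
      h v = 1 + (m v + (4 * d * l * v - k * ((d + l) ^ 2 + k ^ 2)) * Real.sqrt (m v))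
        / (8 * k ^ 2 * l ^ 2 * (k - v) * v))
    (vε : ℝ) (hvε : vε = 1 / 2 * k * ((d + l) ^ 2 + k ^ 2) / (k ^ 2 + d ^ 2 + l ^ 2)) :
    h vε = 1 ∧ (l + d) * (d - l) + k * k = 0 :=
  stmt_10_general l k d hl hk hrhombus m h hm hh vε hvε
end

section
/- Let l, k > 0. Define, for v ∈ (0, k), r(v) = (k² + l² − √((k²+l²)² − 16l²(k−v)v)) / (k² + l² + √((k²+l²)² − 16l²(k−v)v)). Then r attains a strict global maximum on (0, k) at v = k/2; that is, for every v ∈ (0, k) with v ≠ k/2, r(v) < r(k/2). (Since r(v) = b²/a² for the ellipse E_v inscribed in the rectangle [0,l] × [0,k], and E_{k/2} is the midpoint ellipse tangent at the midpoints of the four sides, this says the midpoint ellipse is the unique ellipse of minimal eccentricity inscribed in the rectangle.) -/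
theorem stmt_11 (l k : ℝ) (hl : 0 < l) (hk : 0 < k)
    (r : ℝ → ℝ)
    (hr : ∀ v, r v =
      (k ^ 2 + l ^ 2 - Real.sqrt ((k ^ 2 + l ^ 2) ^ 2 - 16 * l ^ 2 * (k - v) * v))
      / (k ^ 2 + l ^ 2 + Real.sqrt ((k ^ 2 + l ^ 2) ^ 2 - 16 * l ^ 2 * (k - v) * v))) :
    ∀ v ∈ Set.Ioo (0 : ℝ) k, v ≠ k / 2 → r v < r (k / 2) := by
  intro v hv hne
  rw [hr, hr]
  set S := k ^ 2 + l ^ 2 with hS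
  have hSpos : 0 < S := by positivity
  have harg2 : S ^ 2 - 16 * l ^ 2 * (k - k / 2) * (k / 2) = (k ^ 2 - l ^ 2) ^ 2 := by
    ring
  have harg2nn : 0 ≤ S ^ 2 - 16 * l ^ 2 * (k - k / 2) * (k / 2) := by
    rw [harg2]; positivity
  have hprod : (k - v) * v < (k - k / 2) * (k / 2) := by
    have : 0 < (v - k / 2) ^ 2 := by
      have : v - k / 2 ≠ 0 := sub_ne_zero.mpr hne
      positivity
    nlinarith
  have hlt : S ^ 2 - 16 * l ^ 2 * (k - k / 2) * (k / 2)
      < S ^ 2 - 16 * l ^ 2 * (k - v) * v := by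
    nlinarith [mul_pos (by positivity : (0:ℝ) < 16 * l ^ 2) (sub_pos.mpr hprod)]
  set s1 := Real.sqrt (S ^ 2 - 16 * l ^ 2 * (k - k / 2) * (k / 2)) with hs1
  set s2 := Real.sqrt (S ^ 2 - 16 * l ^ 2 * (k - v) * v) with hs2
  have h12 : s1 < s2 := Real.sqrt_lt_sqrt harg2nn hlt
  have hs1nn : 0 ≤ s1 := Real.sqrt_nonneg _
  have hs2nn : 0 ≤ s2 := Real.sqrt_nonneg _
  have hd1 : 0 < S + s1 := by linarith
  have hd2 : 0 < S + s2 := by linarith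
  rw [div_lt_div_iff₀ hd2 hd1]
  nlinarith [mul_pos hSpos (sub_pos.mpr h12)]
end

section
/- Let l, k > 0. For v ∈ (0, k), set a(v)² = 2l²(k−v)v / (k² + l² − √((k²+l²)² − 16l²(k−v)v)) and b(v)² = 2l²(k−v)v / (k² + l² + √((k²+l²)² − 16l²(k−v)v)). Then for every v ∈ (0, k): a(v)² + b(v)² = (k² + l²)/4 and a(v)² − b(v)² = (1/4)·√((k²+l²)² − 16l²v(k−v)). In particular, a(v)² + b(v)² does not depend on v; it is constant as the ellipse varies over all ellipses inscribed in the rectangle [0,l] × [0,k]. -/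
theorem stmt_12 (l k : ℝ) (hl : 0 < l) (hk : 0 < k)
    (a2 b2 : ℝ → ℝ)
    (ha2 : ∀ v, a2 v = 2 * l ^ 2 * (k - v) * v /
      (k ^ 2 + l ^ 2 - Real.sqrt ((k ^ 2 + l ^ 2) ^ 2 - 16 * l ^ 2 * (k - v) * v)))
    (hb2 : ∀ v, b2 v = 2 * l ^ 2 * (k - v) * v /
      (k ^ 2 + l ^ 2 + Real.sqrt ((k ^ 2 + l ^ 2) ^ 2 - 16 * l ^ 2 * (k - v) * v))) :
    ∀ v ∈ Set.Ioo (0 : ℝ) k,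
      a2 v + b2 v = (k ^ 2 + l ^ 2) / 4 ∧
      a2 v - b2 v = 1 / 4 * Real.sqrt ((k ^ 2 + l ^ 2) ^ 2 - 16 * l ^ 2 * v * (k - v)) := by
  intro v hv
  obtain ⟨hv0, hvk⟩ := hv
  have hP : 0 < (k - v) * v := mul_pos (by linarith) hv0
  set S : ℝ := k ^ 2 + l ^ 2 with hS
  have hSpos : 0 < S := by positivity
  have hE : (0:ℝ) ≤ S ^ 2 - 16 * l ^ 2 * (k - v) * v := by
    nlinarith [sq_nonneg (k - 2 * v), sq_nonneg (k ^ 2 - l ^ 2), sq_nonneg l, sq_nonneg k]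
  set D : ℝ := Real.sqrt (S ^ 2 - 16 * l ^ 2 * (k - v) * v) with hD
  have hD2 : D ^ 2 = S ^ 2 - 16 * l ^ 2 * (k - v) * v := Real.sq_sqrt hE
  have hDnn : 0 ≤ D := Real.sqrt_nonneg _
  have hDS : D < S := by
    nlinarith [sq_nonneg l, mul_pos (mul_pos (by positivity : (0:ℝ) < 16 * l ^ 2) (by linarith : 0 < k - v)) hv0]
  have h1 : S - D ≠ 0 := by linarith
  have h2 : S + D ≠ 0 := by linarith
  have hl2 : l ≠ 0 := ne_of_gt hl
  have harg : S ^ 2 - 16 * l ^ 2 * v * (k - v) = S ^ 2 - 16 * l ^ 2 * (k - v) * v := by ring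
  rw [ha2, hb2, harg, ← hD]
  constructor
  · field_simp
    nlinarith [hD2]
  · field_simp
    nlinarith [hD2]
end

section
/- Let l, k > 0. For v ∈ (0, k), set a(v)² = 2l²(k−v)v / (k² + l² − √((k²+l²)² − 16l²(k−v)v)) and b(v)² = 2l²(k−v)v / (k² + l² + √((k²+l²)² − 16l²(k−v)v)). Then a(v)²·b(v)² = (l²/4)·v(k−v) for every v ∈ (0, k), and consequently the function v ↦ a(v)²·b(v)² attains a strict global maximum on (0, k) at v = k/2. (Since the area of the inscribed ellipse E_v is π·a(v)·b(v), this says the midpoint ellipse E_{k/2} is the unique ellipse of maximal area inscribed in the rectangle [0,l] × [0,k].) -/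
theorem stmt_13 (l k : ℝ) (hl : 0 < l) (hk : 0 < k)
    (a2 b2 : ℝ → ℝ)
    (ha2 : ∀ v, a2 v = 2 * l ^ 2 * (k - v) * v /
      (k ^ 2 + l ^ 2 - Real.sqrt ((k ^ 2 + l ^ 2) ^ 2 - 16 * l ^ 2 * (k - v) * v)))
    (hb2 : ∀ v, b2 v = 2 * l ^ 2 * (k - v) * v /
      (k ^ 2 + l ^ 2 + Real.sqrt ((k ^ 2 + l ^ 2) ^ 2 - 16 * l ^ 2 * (k - v) * v))) :
    (∀ v ∈ Set.Ioo (0 : ℝ) k, a2 v * b2 v = l ^ 2 / 4 * (v * (k - v))) ∧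
    (∀ v ∈ Set.Ioo (0 : ℝ) k, v ≠ k / 2 → a2 v * b2 v < a2 (k / 2) * b2 (k / 2)) := by
  have key : ∀ v ∈ Set.Ioo (0 : ℝ) k, a2 v * b2 v = l ^ 2 / 4 * (v * (k - v)) := by
    rintro v ⟨hv0, hvk⟩
    have hrad : (0:ℝ) ≤ (k ^ 2 + l ^ 2) ^ 2 - 16 * l ^ 2 * (k - v) * v := by
      nlinarith [sq_nonneg (k ^ 2 - l ^ 2), sq_nonneg (k - 2 * v), sq_nonneg l]
    set S := Real.sqrt ((k ^ 2 + l ^ 2) ^ 2 - 16 * l ^ 2 * (k - v) * v) with hSdef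
    have hS : S ^ 2 = (k ^ 2 + l ^ 2) ^ 2 - 16 * l ^ 2 * (k - v) * v := Real.sq_sqrt hrad
    have hSnn : 0 ≤ S := Real.sqrt_nonneg _
    have hpos : 0 < 16 * l ^ 2 * (k - v) * v := by
      have h1 : 0 < k - v := by linarith
      positivity
    rw [ha2, hb2, div_mul_div_comm]
    have hden : (k ^ 2 + l ^ 2 - S) * (k ^ 2 + l ^ 2 + S) = 16 * l ^ 2 * (k - v) * v := by
      nlinarith [hS]
    rw [hden, div_eq_iff (ne_of_gt hpos)]
    ring
  refine ⟨key, ?_⟩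
  rintro v ⟨hv0, hvk⟩ hne
  rw [key v ⟨hv0, hvk⟩, key (k / 2) ⟨by linarith, by linarith⟩]
  have h2 : 0 < (v - k / 2) ^ 2 := by
    have h3 : v - k / 2 ≠ 0 := sub_ne_zero.mpr hne
    positivity
  nlinarith [mul_pos (mul_pos hl hl) h2]
end

section
/- Let l, k > 0. For v ∈ (0, k), set a(v)² = 2l²(k−v)v / (k² + l² − √((k²+l²)² − 16l²(k−v)v)) and b(v)² = 2l²(k−v)v / (k² + l² + √((k²+l²)² − 16l²(k−v)v)), and define the arc length L(v) = 2·∫₀^{π/2} √(a(v)² + b(v)² − (a(v)² − b(v)²)·cos(2t)) dt. Then L attains a strict global maximum on (0, k) at v = k/2; that is, for every v ∈ (0, k) with v ≠ k/2, L(v) < L(k/2). (This says the midpoint ellipse is the unique ellipse of maximal arc length inscribed in the rectangle [0,l] × [0,k].) -/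
/-!
With `A = k² + l²` and `D(v) = √(A² - 16 l² (k - v) v)` one has `a(v)² = (A + D)/8` and
`b(v)² = (A - D)/8`, so `L(v) = ∫₀^{π/2} √(A - D cos 2t) dt`. Pairing `t` with `π/2 - t` turns
the integrand into `(√(A - D c) + √(A + D c))/2` with `c = cos 2t`, and
`(√(A - D c) + √(A + D c))² = 2A + 2√(A² - D² c²)` decreases strictly in `D`. Hence `L` is a
strictly decreasing function of `D(v)`, and `D(v)² = (k² - l²)² + 4 l² (k - 2v)²` is smallest
exactly at `v = k/2`.
-/

open Real Set intervalIntegral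

section SqrtSum

variable {A x y : ℝ}

lemma sq_sqrt_sub_add_sqrt_add (hx : |x| ≤ A) :
    (√(A - x) + √(A + x)) ^ 2 = 2 * A + 2 * √(A ^ 2 - x ^ 2) := by
  obtain ⟨hx₁, hx₂⟩ := abs_le.mp hx
  rw [add_sq, sq_sqrt (by linarith), sq_sqrt (by linarith), mul_assoc, ← sqrt_mul (by linarith)]
  ring_nf

lemma sqrt_sub_add_sqrt_add_le (hxy : y ^ 2 ≤ x ^ 2) (hx : |x| ≤ A) :
    √(A - x) + √(A + x) ≤ √(A - y) + √(A + y) := by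
  have hy : |y| ≤ A := (sq_le_sq.mp hxy).trans hx
  rw [← pow_le_pow_iff_left₀ (by positivity) (by positivity) two_ne_zero,
    sq_sqrt_sub_add_sqrt_add hx, sq_sqrt_sub_add_sqrt_add hy]
  gcongr

lemma sqrt_sub_add_sqrt_add_lt (hxy : y ^ 2 < x ^ 2) (hx : |x| ≤ A) :
    √(A - x) + √(A + x) < √(A - y) + √(A + y) := by
  have hy : |y| ≤ A := (sq_le_sq.mp hxy.le).trans hx
  have hxA : x ^ 2 ≤ A ^ 2 := sq_le_sq.mpr (hx.trans (le_abs_self A))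
  rw [← pow_lt_pow_iff_left₀ (by positivity) (by positivity) two_ne_zero,
    sq_sqrt_sub_add_sqrt_add hx, sq_sqrt_sub_add_sqrt_add hy]
  gcongr

end SqrtSum

lemma integral_sqrt_sub_mul_cos_eq_integral_sqrt_add (A d : ℝ) :
    ∫ t in (0 : ℝ)..π / 2, √(A - d * cos (2 * t)) =
      ∫ t in (0 : ℝ)..π / 2, √(A + d * cos (2 * t)) := by
  have hsymm := integral_comp_sub_left (a := 0) (b := π / 2)
    (fun t => √(A - d * cos (2 * t))) (π / 2)
  rw [sub_self, sub_zero] at hsymm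
  rw [← hsymm]
  congr 1 with t
  rw [show 2 * (π / 2 - t) = π - 2 * t by ring, cos_pi_sub, mul_neg, sub_neg_eq_add]

lemma two_mul_integral_sqrt_sub_mul_cos (A d : ℝ) :
    2 * ∫ t in (0 : ℝ)..π / 2, √(A - d * cos (2 * t)) =
      ∫ t in (0 : ℝ)..π / 2, (√(A - d * cos (2 * t)) + √(A + d * cos (2 * t))) := by
  rw [integral_add (by apply Continuous.intervalIntegrable; fun_prop)
    (by apply Continuous.intervalIntegrable; fun_prop),
    ← integral_sqrt_sub_mul_cos_eq_integral_sqrt_add, two_mul]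

lemma strictAntiOn_integral_sqrt_sub_mul_cos (A : ℝ) :
    StrictAntiOn (fun d => ∫ t in (0 : ℝ)..π / 2, √(A - d * cos (2 * t))) (Icc 0 A) := by
  intro d' hd' d hd hlt
  have hcos (t : ℝ) : |d * cos (2 * t)| ≤ A := by
    rw [abs_mul, abs_of_nonneg hd.1]
    exact mul_le_of_le_one_right hd.1 (abs_cos_le_one _) |>.trans hd.2
  dsimp only
  rw [← mul_lt_mul_iff_right₀ two_pos, two_mul_integral_sqrt_sub_mul_cos,
    two_mul_integral_sqrt_sub_mul_cos]
  refine integral_lt_integral_of_continuousOn_of_le_of_exists_lt (by positivity)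
    (by fun_prop) (by fun_prop) (fun t _ => ?_) ⟨0, left_mem_Icc.mpr (by positivity), ?_⟩
  · refine sqrt_sub_add_sqrt_add_le ?_ (hcos t)
    rw [mul_pow, mul_pow]
    gcongr
    exact hd'.1
  · refine sqrt_sub_add_sqrt_add_lt ?_ (hcos 0)
    simp only [mul_zero, cos_zero, mul_one]
    exact pow_lt_pow_left₀ hlt hd'.1 two_ne_zero

lemma div_sub_eq_of_sq_eq {A q s : ℝ} (hq : q ≠ 0) (hs : s ^ 2 = A ^ 2 - 8 * q) :
    q / (A - s) = (A + s) / 8 := by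
  have hAs : A - s ≠ 0 := by
    rintro h
    rw [show s = A by linarith] at hs
    exact hq (by linarith)
  rw [div_eq_div_iff hAs (by norm_num)]
  linear_combination hs

lemma div_add_eq_of_sq_eq {A q s : ℝ} (hq : q ≠ 0) (hs : s ^ 2 = A ^ 2 - 8 * q) :
    q / (A + s) = (A - s) / 8 := by
  simpa [sub_eq_add_neg] using div_sub_eq_of_sq_eq (s := -s) hq (by rwa [neg_sq])

lemma two_mul_integral_sqrt_semiaxes (A s : ℝ) :
    2 * ∫ t in (0 : ℝ)..π / 2,
        √((A + s) / 8 + (A - s) / 8 - ((A + s) / 8 - (A - s) / 8) * cos (2 * t)) =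
      ∫ t in (0 : ℝ)..π / 2, √(A - s * cos (2 * t)) := by
  have h4 : √(4 : ℝ) = 2 := by
    rw [show (4 : ℝ) = 2 ^ 2 by norm_num, sqrt_sq zero_le_two]
  simp_rw [show ∀ t, (A + s) / 8 + (A - s) / 8 - ((A + s) / 8 - (A - s) / 8) * cos (2 * t) =
    (A - s * cos (2 * t)) / 4 by intro t; ring, sqrt_div' _ zero_le_four, h4, integral_div]
  ring

lemma sq_sub_sixteen_mul_eq (l k v : ℝ) :
    (k ^ 2 + l ^ 2) ^ 2 - 16 * l ^ 2 * (k - v) * v =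
      (k ^ 2 - l ^ 2) ^ 2 + (2 * l * (k - 2 * v)) ^ 2 := by
  ring

section Rectangle

variable {l k v : ℝ}

lemma sqrt_sq_sub_sixteen_mul_mem_Icc (hv : v ∈ Icc 0 k) :
    √((k ^ 2 + l ^ 2) ^ 2 - 16 * l ^ 2 * (k - v) * v) ∈ Icc 0 (k ^ 2 + l ^ 2) := by
  refine ⟨sqrt_nonneg _, (sqrt_le_left (by positivity)).mpr ?_⟩
  have : 0 ≤ l ^ 2 * (k - v) * v :=
    mul_nonneg (mul_nonneg (sq_nonneg l) (sub_nonneg.mpr hv.2)) hv.1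
  linarith

lemma sqrt_sq_sub_sixteen_mul_lt (hl : l ≠ 0) (hv : v ≠ k / 2) :
    √((k ^ 2 + l ^ 2) ^ 2 - 16 * l ^ 2 * (k - k / 2) * (k / 2)) <
      √((k ^ 2 + l ^ 2) ^ 2 - 16 * l ^ 2 * (k - v) * v) := by
  have hv' : 2 * l * (k - 2 * v) ≠ 0 :=
    mul_ne_zero (mul_ne_zero two_ne_zero hl) (by contrapose! hv; linarith)
  rw [sq_sub_sixteen_mul_eq, sq_sub_sixteen_mul_eq, show k - 2 * (k / 2) = 0 by ring, mul_zero,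
    zero_pow two_ne_zero, add_zero]
  exact sqrt_lt_sqrt (sq_nonneg _) (lt_add_of_pos_right _ (sq_pos_of_ne_zero hv'))

lemma semiaxes_sq_eq (hl : l ≠ 0) (hv : v ∈ Ioo 0 k) :
    2 * l ^ 2 * (k - v) * v / (k ^ 2 + l ^ 2 - √((k ^ 2 + l ^ 2) ^ 2 - 16 * l ^ 2 * (k - v) * v)) =
        (k ^ 2 + l ^ 2 + √((k ^ 2 + l ^ 2) ^ 2 - 16 * l ^ 2 * (k - v) * v)) / 8 ∧
      2 * l ^ 2 * (k - v) * v /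
          (k ^ 2 + l ^ 2 + √((k ^ 2 + l ^ 2) ^ 2 - 16 * l ^ 2 * (k - v) * v)) =
        (k ^ 2 + l ^ 2 - √((k ^ 2 + l ^ 2) ^ 2 - 16 * l ^ 2 * (k - v) * v)) / 8 := by
  have hq : 2 * l ^ 2 * (k - v) * v ≠ 0 :=
    (mul_pos (mul_pos (by positivity) (sub_pos.mpr hv.2)) hv.1).ne'
  have hs : √((k ^ 2 + l ^ 2) ^ 2 - 16 * l ^ 2 * (k - v) * v) ^ 2 =
      (k ^ 2 + l ^ 2) ^ 2 - 8 * (2 * l ^ 2 * (k - v) * v) := by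
    rw [sq_sqrt (by rw [sq_sub_sixteen_mul_eq]; positivity)]
    ring
  exact ⟨div_sub_eq_of_sq_eq hq hs, div_add_eq_of_sq_eq hq hs⟩

end Rectangle

theorem stmt_14_general (l k : ℝ) (hl : 0 < l)
    (a2 b2 L : ℝ → ℝ)
    (ha2 : ∀ v, a2 v = 2 * l ^ 2 * (k - v) * v /
      (k ^ 2 + l ^ 2 - Real.sqrt ((k ^ 2 + l ^ 2) ^ 2 - 16 * l ^ 2 * (k - v) * v)))
    (hb2 : ∀ v, b2 v = 2 * l ^ 2 * (k - v) * v /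
      (k ^ 2 + l ^ 2 + Real.sqrt ((k ^ 2 + l ^ 2) ^ 2 - 16 * l ^ 2 * (k - v) * v)))
    (hL : ∀ v, L v = 2 * ∫ t in (0 : ℝ)..(Real.pi / 2),
      Real.sqrt (a2 v + b2 v - (a2 v - b2 v) * Real.cos (2 * t))) :
    ∀ v ∈ Set.Ioo (0 : ℝ) k, v ≠ k / 2 → L v < L (k / 2) := by
  intro v hv hne
  have hk2 : k / 2 ∈ Ioo 0 k := ⟨by linarith [hv.1, hv.2], by linarith [hv.1, hv.2]⟩
  have hL' (w : ℝ) (hw : w ∈ Ioo 0 k) : L w = ∫ t in (0 : ℝ)..π / 2,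
      √(k ^ 2 + l ^ 2 - √((k ^ 2 + l ^ 2) ^ 2 - 16 * l ^ 2 * (k - w) * w) * cos (2 * t)) := by
    obtain ⟨ha, hb⟩ := semiaxes_sq_eq hl.ne' hw
    rw [hL, ha2, hb2, ha, hb, two_mul_integral_sqrt_semiaxes]
  rw [hL' v hv, hL' _ hk2]
  exact strictAntiOn_integral_sqrt_sub_mul_cos _
    (sqrt_sq_sub_sixteen_mul_mem_Icc (Ioo_subset_Icc_self hk2))
    (sqrt_sq_sub_sixteen_mul_mem_Icc (Ioo_subset_Icc_self hv))
    (sqrt_sq_sub_sixteen_mul_lt hl.ne' hne)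

theorem stmt_14 (l k : ℝ) (hl : 0 < l) (hk : 0 < k)
    (a2 b2 L : ℝ → ℝ)
    (ha2 : ∀ v, a2 v = 2 * l ^ 2 * (k - v) * v /
      (k ^ 2 + l ^ 2 - Real.sqrt ((k ^ 2 + l ^ 2) ^ 2 - 16 * l ^ 2 * (k - v) * v)))
    (hb2 : ∀ v, b2 v = 2 * l ^ 2 * (k - v) * v /
      (k ^ 2 + l ^ 2 + Real.sqrt ((k ^ 2 + l ^ 2) ^ 2 - 16 * l ^ 2 * (k - v) * v)))
    (hL : ∀ v, L v = 2 * ∫ t in (0 : ℝ)..(Real.pi / 2),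
      Real.sqrt (a2 v + b2 v - (a2 v - b2 v) * Real.cos (2 * t))) :
    ∀ v ∈ Set.Ioo (0 : ℝ) k, v ≠ k / 2 → L v < L (k / 2) :=
  stmt_14_general l k hl a2 b2 L ha2 hb2 hL
end

section
/- Let d, k, l > 0 and let 0 < u < k²/d². Then the set Φ_u = {(x,y) ∈ ℝ² : kux² + ky² − 2udxy − klux + (ud(l+d) − k²)y = 0} is an ellipse (the image of the unit circle under an invertible affine map of ℝ²) passing through all four vertices O=(0,0), P=(l,0), Q=(d,k), R=(l+d,k) of the parallelogram D. Moreover, if Φ_u = {c + a·cos t·(cos θ, sin θ) + b·sin t·(−sin θ, cos θ) : t ∈ ℝ} with c ∈ ℝ², θ ∈ ℝ and a ≥ b > 0, then b²/a² = (k(u+1) − √(k²(1−u)² + 4d²u²))² / (4u(k² − ud²)). -/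
open Real

def quadForm (A B C : ℝ) (p : ℝ × ℝ) : ℝ := A * p.1 ^ 2 + 2 * B * p.1 * p.2 + C * p.2 ^ 2

def quadPolar (A B C : ℝ) (p q : ℝ × ℝ) : ℝ :=
  A * p.1 * q.1 + B * (p.1 * q.2 + p.2 * q.1) + C * p.2 * q.2

noncomputable def upperTriangularEquiv (a b c : ℝ) (ha : a ≠ 0) (hc : c ≠ 0) :
    (ℝ × ℝ) ≃ₗ[ℝ] (ℝ × ℝ) where
  toFun w := (a * w.1 + b * w.2, c * w.2)
  invFun v := ((v.1 - b * (v.2 / c)) / a, v.2 / c)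
  map_add' v w := by ext <;> simp only [Prod.fst_add, Prod.snd_add] <;> ring
  map_smul' t v := by
    ext <;> simp only [Prod.smul_fst, Prod.smul_snd, smul_eq_mul, RingHom.id_apply] <;> ring
  left_inv w := by ext <;> field_simp; ring
  right_inv v := by ext <;> field_simp; ring

theorem mul_quadForm_eq_add_sq (A B C : ℝ) (p : ℝ × ℝ) :
    A * quadForm A B C p = (A * p.1 + B * p.2) ^ 2 + (A * C - B ^ 2) * p.2 ^ 2 := by
  unfold quadForm; ring

theorem quadForm_smul (A B C x : ℝ) (v : ℝ × ℝ) :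
    quadForm A B C (x • v) = x ^ 2 * quadForm A B C v := by
  simp only [quadForm, Prod.smul_fst, Prod.smul_snd, smul_eq_mul]; ring

theorem quadPolar_smul_smul (A B C x y : ℝ) (v w : ℝ × ℝ) :
    quadPolar A B C (x • v) (y • w) = x * y * quadPolar A B C v w := by
  simp only [quadPolar, Prod.smul_fst, Prod.smul_snd, smul_eq_mul]; ring

theorem quadForm_add_smul_add_smul (A B C : ℝ) (v f g : ℝ × ℝ) (x y : ℝ) :
    quadForm A B C (v + x • f + y • g) =
      x ^ 2 * quadForm A B C f + y ^ 2 * quadForm A B C g + 2 * (x * y) * quadPolar A B C f g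
        + 2 * x * quadPolar A B C v f + 2 * y * quadPolar A B C v g + quadForm A B C v := by
  simp only [quadForm, quadPolar, Prod.fst_add, Prod.snd_add, Prod.smul_fst, Prod.smul_snd,
    smul_eq_mul]
  ring

theorem quadForm_rotation_add (A B C θ : ℝ) :
    quadForm A B C (cos θ, sin θ) + quadForm A B C (-sin θ, cos θ) = A + C := by
  simp only [quadForm]
  linear_combination (A + C) * cos_sq_add_sin_sq θ

theorem quadForm_rotation_mul (A B C θ : ℝ) :
    quadForm A B C (cos θ, sin θ) * quadForm A B C (-sin θ, cos θ)
      - quadPolar A B C (cos θ, sin θ) (-sin θ, cos θ) ^ 2 = A * C - B ^ 2 := by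
  simp only [quadForm, quadPolar]
  linear_combination (A * C - B ^ 2) * (cos θ ^ 2 + sin θ ^ 2 + 1) * cos_sq_add_sin_sq θ

theorem coeffs_eq_of_forall_cos_sin {α β γ δ ε ρ : ℝ}
    (h : ∀ t : ℝ, α * cos t ^ 2 + β * sin t ^ 2 + 2 * γ * (cos t * sin t)
      + δ * cos t + ε * sin t = ρ) :
    α = ρ ∧ β = ρ ∧ γ = 0 := by
  have h₀ := h 0
  have hπ := h π
  have hπ₂ := h (π / 2)
  have hπ₂' := h (-(π / 2))
  have hπ₄ := h (π / 4)
  simp only [cos_zero, sin_zero, cos_pi, sin_pi, cos_pi_div_two, sin_pi_div_two, cos_neg,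
    sin_neg, cos_pi_div_four, sin_pi_div_four] at h₀ hπ hπ₂ hπ₂' hπ₄
  have hα : α = ρ := by linarith
  have hβ : β = ρ := by linarith
  have hδ : δ = 0 := by linarith
  have hε : ε = 0 := by linarith
  subst hδ hε
  refine ⟨hα, hβ, ?_⟩
  linear_combination (-(α + β + 2 * γ) / 4) * sq_sqrt zero_le_two + hπ₄ - (hα + hβ) / 2

theorem div_eq_sub_sqrt_sq_div {x y T Δ : ℝ} (hxy : x ≤ y) (hsum : x + y = T)
    (hprod : x * y = Δ) (hΔ : Δ ≠ 0) :
    x / y = (T - √(T ^ 2 - 4 * Δ)) ^ 2 / (4 * Δ) := by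
  have hdisc : T ^ 2 - 4 * Δ = (y - x) ^ 2 := by rw [← hsum, ← hprod]; ring
  rw [hdisc, sqrt_sq (sub_nonneg.mpr hxy), ← hsum, ← hprod]
  have hx : x ≠ 0 := left_ne_zero_of_mul (hprod ▸ hΔ)
  have hy : y ≠ 0 := right_ne_zero_of_mul (hprod ▸ hΔ)
  field_simp
  ring

section QuadForm

variable {A B C : ℝ}

theorem quadForm_nonneg (hA : 0 < A) (hdet : B ^ 2 ≤ A * C) (p : ℝ × ℝ) :
    0 ≤ quadForm A B C p := by
  have hdet' : 0 ≤ A * C - B ^ 2 := sub_nonneg.mpr hdet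
  have : 0 ≤ A * quadForm A B C p := by rw [mul_quadForm_eq_add_sq]; positivity
  exact nonneg_of_mul_nonneg_right (by linarith) hA

theorem isEllipse_quadForm_sub_eq (hA : 0 < A) (hdet : 0 < A * C - B ^ 2) (m : ℝ × ℝ)
    {r : ℝ} (hr : 0 < r) : IsEllipse {p | quadForm A B C (p - m) = r} := by
  set D := A * C - B ^ 2
  set a := √(r / A)
  set c := √(A * r / D)
  have ha : A * a ^ 2 = r := by rw [sq_sqrt (by positivity)]; field_simp
  have hc : D * c ^ 2 = A * r := by rw [sq_sqrt (by positivity)]; field_simp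
  let L := upperTriangularEquiv a (-(B * c) / A) c (by positivity) (by positivity)
  have hL : ∀ w, quadForm A B C (L w) = r * (w.1 ^ 2 + w.2 ^ 2) := fun w => by
    refine mul_left_cancel₀ hA.ne' ?_
    rw [mul_quadForm_eq_add_sq]
    change (A * (a * w.1 + -(B * c) / A * w.2) + B * (c * w.2)) ^ 2 + D * (c * w.2) ^ 2 = _
    have hfirst : A * (a * w.1 + -(B * c) / A * w.2) + B * (c * w.2) = A * a * w.1 := by
      field_simp; ring
    rw [hfirst]
    linear_combination (A * w.1 ^ 2) * ha + w.2 ^ 2 * hc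
  let f := L.toAffineEquiv.trans (AffineEquiv.constVAdd ℝ (ℝ × ℝ) m)
  have hpre : (f : ℝ × ℝ → ℝ × ℝ) ⁻¹' {p | quadForm A B C (p - m) = r} = unitCircle := by
    ext w
    change quadForm A B C (m + L w - m) = r ↔ w.1 ^ 2 + w.2 ^ 2 = 1
    rw [add_sub_cancel_left, hL, mul_eq_left₀ hr.ne']
  exact ⟨f, hpre ▸ (f.toEquiv.image_preimage _).symm⟩

theorem quadForm_axes_of_forall {r a b θ : ℝ} {c m : ℝ × ℝ} (ha : 0 < a) (hb : 0 < b)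
    (h : ∀ t : ℝ, quadForm A B C
      (c + (a * cos t) • (cos θ, sin θ) + (b * sin t) • (-sin θ, cos θ) - m) = r) :
    a ^ 2 * quadForm A B C (cos θ, sin θ) = b ^ 2 * quadForm A B C (-sin θ, cos θ) ∧
      quadPolar A B C (cos θ, sin θ) (-sin θ, cos θ) = 0 := by
  set e₁ : ℝ × ℝ := (cos θ, sin θ)
  set e₂ : ℝ × ℝ := (-sin θ, cos θ)
  have hexpand : ∀ t : ℝ, a ^ 2 * quadForm A B C e₁ * cos t ^ 2
      + b ^ 2 * quadForm A B C e₂ * sin t ^ 2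
      + 2 * (a * b * quadPolar A B C e₁ e₂) * (cos t * sin t)
      + 2 * quadPolar A B C (c - m) (a • e₁) * cos t
      + 2 * quadPolar A B C (c - m) (b • e₂) * sin t
      = r - quadForm A B C (c - m) := fun t => by
    have hpt : c + (a * cos t) • e₁ + (b * sin t) • e₂ - m
        = (c - m) + cos t • (a • e₁) + sin t • (b • e₂) := by module
    have ht := h t
    rw [hpt, quadForm_add_smul_add_smul, quadForm_smul, quadForm_smul, quadPolar_smul_smul] at ht
    linear_combination ht
  obtain ⟨h₁, h₂, hγ⟩ := coeffs_eq_of_forall_cos_sin hexpand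
  exact ⟨h₁.trans h₂.symm, (mul_eq_zero.mp hγ).resolve_left (by positivity)⟩

theorem sq_div_sq_eq_of_forall {r a b θ : ℝ} {c m : ℝ × ℝ} (hA : 0 < A)
    (hdet : 0 < A * C - B ^ 2) (hba : b ≤ a) (hb : 0 < b)
    (h : ∀ t : ℝ, quadForm A B C
      (c + (a * cos t) • (cos θ, sin θ) + (b * sin t) • (-sin θ, cos θ) - m) = r) :
    b ^ 2 / a ^ 2 =
      (A + C - √((A + C) ^ 2 - 4 * (A * C - B ^ 2))) ^ 2 / (4 * (A * C - B ^ 2)) := by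
  obtain ⟨haxes, hpolar⟩ := quadForm_axes_of_forall (hb.trans_le hba) hb h
  have hprod := quadForm_rotation_mul A B C θ
  rw [hpolar, zero_pow two_ne_zero, sub_zero] at hprod
  have h₁ : 0 ≤ quadForm A B C (cos θ, sin θ) := quadForm_nonneg hA (by linarith) _
  have h₂ : quadForm A B C (-sin θ, cos θ) ≠ 0 := right_ne_zero_of_mul (hprod ▸ hdet.ne')
  have hle : quadForm A B C (cos θ, sin θ) ≤ quadForm A B C (-sin θ, cos θ) := by
    refine le_of_mul_le_mul_left ?_ (pow_pos hb 2)
    rw [← haxes]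
    exact mul_le_mul_of_nonneg_right (pow_le_pow_left₀ hb.le hba 2) h₁
  rw [← div_eq_sub_sqrt_sq_div hle (quadForm_rotation_add A B C θ) hprod hdet.ne',
    div_eq_div_iff (pow_pos (hb.trans_le hba) 2).ne' h₂]
  linear_combination -haxes

end QuadForm

theorem stmt_15_general (d k l u : ℝ) (hd : 0 < d) (hk : 0 < k)
    (hu : u ∈ Set.Ioo (0 : ℝ) (k ^ 2 / d ^ 2))
    (Φ : Set (ℝ × ℝ))
    (hΦ : Φ = {p : ℝ × ℝ |
      k * u * p.1 ^ 2 + k * p.2 ^ 2 - 2 * u * d * p.1 * p.2 - k * l * u * p.1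
        + (u * d * (l + d) - k ^ 2) * p.2 = 0}) :
    IsEllipse Φ ∧
    ((0 : ℝ), (0 : ℝ)) ∈ Φ ∧ ((l : ℝ), (0 : ℝ)) ∈ Φ ∧ ((d : ℝ), k) ∈ Φ ∧ (l + d, k) ∈ Φ ∧
    (∀ (c : ℝ × ℝ) (θ a b : ℝ), b ≤ a → 0 < b →
      Φ = {q : ℝ × ℝ | ∃ t : ℝ,
        q = c + (a * Real.cos t) • (Real.cos θ, Real.sin θ)
              + (b * Real.sin t) • (-Real.sin θ, Real.cos θ)} →
      b ^ 2 / a ^ 2 =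
        (k * (u + 1) - Real.sqrt (k ^ 2 * (1 - u) ^ 2 + 4 * d ^ 2 * u ^ 2)) ^ 2
          / (4 * u * (k ^ 2 - u * d ^ 2))) := by
  obtain ⟨hu₀, hu₁⟩ := hu
  have hud : u * d ^ 2 < k ^ 2 := (lt_div_iff₀ (by positivity)).mp hu₁
  have hdet : 0 < k * u * k - (-(u * d)) ^ 2 := by nlinarith
  have hr : 0 < k * (u * l ^ 2 + k ^ 2 - u * d ^ 2) / 4 := by
    have : 0 < u * l ^ 2 + k ^ 2 - u * d ^ 2 := by nlinarith [mul_nonneg hu₀.le (sq_nonneg l)]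
    positivity
  have hΦ' : Φ = {p | quadForm (k * u) (-(u * d)) k (p - ((l + d) / 2, k / 2))
      = k * (u * l ^ 2 + k ^ 2 - u * d ^ 2) / 4} := by
    rw [hΦ]
    ext p
    simp only [Set.mem_ofPred_eq, quadForm, Prod.fst_sub, Prod.snd_sub]
    constructor <;> intro h <;> linear_combination h
  refine ⟨hΦ' ▸ isEllipse_quadForm_sub_eq (by positivity) hdet _ hr, ?_, ?_, ?_, ?_, ?_⟩
  iterate 4 (rw [hΦ, Set.mem_ofPred_eq]; ring)
  intro c θ a b hba hb hpar
  have h : ∀ t : ℝ, quadForm (k * u) (-(u * d)) k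
      (c + (a * cos t) • (cos θ, sin θ) + (b * sin t) • (-sin θ, cos θ) - ((l + d) / 2, k / 2))
      = k * (u * l ^ 2 + k ^ 2 - u * d ^ 2) / 4 := fun t => by
    have : c + (a * cos t) • (cos θ, sin θ) + (b * sin t) • (-sin θ, cos θ) ∈ Φ :=
      hpar ▸ ⟨t, rfl⟩
    rwa [hΦ'] at this
  rw [sq_div_sq_eq_of_forall (by positivity) hdet hba hb h]
  have hdisc : (k * u + k) ^ 2 - 4 * (k * u * k - (-(u * d)) ^ 2)
      = k ^ 2 * (1 - u) ^ 2 + 4 * d ^ 2 * u ^ 2 := by ring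
  rw [hdisc]
  ring

theorem stmt_15 (d k l u : ℝ) (hd : 0 < d) (hk : 0 < k) (hl : 0 < l)
    (hu : u ∈ Set.Ioo (0 : ℝ) (k ^ 2 / d ^ 2))
    (Φ : Set (ℝ × ℝ))
    (hΦ : Φ = {p : ℝ × ℝ |
      k * u * p.1 ^ 2 + k * p.2 ^ 2 - 2 * u * d * p.1 * p.2 - k * l * u * p.1
        + (u * d * (l + d) - k ^ 2) * p.2 = 0}) :
    IsEllipse Φ ∧
    ((0 : ℝ), (0 : ℝ)) ∈ Φ ∧ ((l : ℝ), (0 : ℝ)) ∈ Φ ∧ ((d : ℝ), k) ∈ Φ ∧ (l + d, k) ∈ Φ ∧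
    (∀ (c : ℝ × ℝ) (θ a b : ℝ), b ≤ a → 0 < b →
      Φ = {q : ℝ × ℝ | ∃ t : ℝ,
        q = c + (a * Real.cos t) • (Real.cos θ, Real.sin θ)
              + (b * Real.sin t) • (-Real.sin θ, Real.cos θ)} →
      b ^ 2 / a ^ 2 =
        (k * (u + 1) - Real.sqrt (k ^ 2 * (1 - u) ^ 2 + 4 * d ^ 2 * u ^ 2)) ^ 2
          / (4 * u * (k ^ 2 - u * d ^ 2))) :=
  stmt_15_general d k l u hd hk hu Φ hΦ
end

section
/- Let d, k > 0. Define, for u ∈ (0, k²/d²), h_O(u) = (k(u+1) − √(k²(1−u)² + 4d²u²))² / (4u(k² − ud²)). Then h_O attains a strict global maximum on (0, k²/d²) at u* = k²/(k² + 2d²), and 1 − h_O(u*) = 2d(√(d² + k²) − d)/k². (Since h_O(u) = b²/a² for the ellipse with parameter u circumscribed about the parallelogram with vertices (0,0), (l,0), (d,k), (l+d,k), this identifies the unique ellipse of minimal eccentricity circumscribed about the parallelogram and gives 1 − b²/a² for it.) -/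
/-!
Write `A = k (u + 1)` and `Q = √(k² (1 - u)² + 4 d² u²)`. Since `A² - Q² = 4 u (k² - u d²)`,
`h_O(u) = (A - Q) / (A + Q) = (1 - r) / (1 + r)` with `r = Q / A`, a strictly decreasing function
of `r`. The identity `(d² + k²) Q² - d² A² = (k² - u (k² + 2 d²))²` shows `r ≥ d / √(d² + k²)`,
with equality exactly at `u = k² / (k² + 2 d²)`.
-/

open Real Set

lemma sq_div_sq_sub_sq_eq_one_sub_div_one_add {A Q : ℝ} (hA : A ≠ 0) (hAQ : Q ≠ A) :
    (A - Q) ^ 2 / (A ^ 2 - Q ^ 2) = (1 - Q / A) / (1 + Q / A) := by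
  have hsub : A - Q ≠ 0 := sub_ne_zero.mpr hAQ.symm
  rw [sq, sq_sub_sq, mul_div_mul_right _ _ hsub]
  field_simp

lemma strictAntiOn_one_sub_div_one_add :
    StrictAntiOn (fun r : ℝ => (1 - r) / (1 + r)) (Ioi (-1)) := by
  intro r hr s hs hrs
  simp only [mem_Ioi] at hr hs
  rw [div_lt_div_iff₀ (by linarith) (by linarith)]
  linarith

lemma one_sub_one_sub_div_one_add_div_sqrt {d k : ℝ} (hd : 0 < d) (hk : 0 < k) :
    1 - (1 - d / √(d ^ 2 + k ^ 2)) / (1 + d / √(d ^ 2 + k ^ 2)) =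
      2 * d * (√(d ^ 2 + k ^ 2) - d) / k ^ 2 := by
  have ht : √(d ^ 2 + k ^ 2) ^ 2 = d ^ 2 + k ^ 2 := sq_sqrt (by positivity)
  have ht0 : 0 < √(d ^ 2 + k ^ 2) := sqrt_pos.mpr (by positivity)
  field_simp
  linear_combination (-2 * d) * ht

/-- `(a² - b²) / (a² + b²)` for the circumscribed ellipse with parameter `u`, since
`b² / a² = (1 - r) / (1 + r)`. -/
noncomputable def axisRatioDefect (d k u : ℝ) : ℝ :=
  √(k ^ 2 * (1 - u) ^ 2 + 4 * d ^ 2 * u ^ 2) / (k * (u + 1))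

lemma axisRatioDefect_sq {d k u : ℝ} (hk : 0 < k) (hu : 0 < u) :
    (d ^ 2 + k ^ 2) * axisRatioDefect d k u ^ 2 =
      d ^ 2 + (k ^ 2 - u * (k ^ 2 + 2 * d ^ 2)) ^ 2 / (k * (u + 1)) ^ 2 := by
  have hA : k * (u + 1) ≠ 0 := by positivity
  rw [axisRatioDefect, div_pow, sq_sqrt (by positivity)]
  field_simp
  ring

lemma axisRatioDefect_nonneg {d k u : ℝ} (hk : 0 < k) (hu : 0 < u) :
    0 ≤ axisRatioDefect d k u := by
  unfold axisRatioDefect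
  positivity

lemma axisRatioDefect_optimal {d k : ℝ} (hd : 0 < d) (hk : 0 < k) :
    axisRatioDefect d k (k ^ 2 / (k ^ 2 + 2 * d ^ 2)) = d / √(d ^ 2 + k ^ 2) := by
  have hdk : 0 < d ^ 2 + k ^ 2 := by positivity
  have hsq := axisRatioDefect_sq (d := d) hk (by positivity : 0 < k ^ 2 / (k ^ 2 + 2 * d ^ 2))
  rw [div_mul_cancel₀ _ (by positivity), sub_self, zero_pow two_ne_zero, zero_div,
    add_zero] at hsq
  refine (pow_left_inj₀ (axisRatioDefect_nonneg hk (by positivity)) (by positivity)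
    two_ne_zero).mp ?_
  rw [div_pow, sq_sqrt hdk.le, eq_div_iff hdk.ne', mul_comm, hsq]

lemma div_sqrt_lt_axisRatioDefect {d k u : ℝ} (hk : 0 < k) (hu : 0 < u)
    (hne : u ≠ k ^ 2 / (k ^ 2 + 2 * d ^ 2)) :
    d / √(d ^ 2 + k ^ 2) < axisRatioDefect d k u := by
  have hdk : 0 < d ^ 2 + k ^ 2 := by positivity
  have hgap : 0 < (k ^ 2 - u * (k ^ 2 + 2 * d ^ 2)) ^ 2 / (k * (u + 1)) ^ 2 := by
    refine div_pos (sq_pos_of_ne_zero ?_) (by positivity)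
    intro h
    exact hne ((eq_div_iff (by positivity)).mpr (by linarith))
  refine lt_of_pow_lt_pow_left₀ 2 (axisRatioDefect_nonneg hk hu) ?_
  rw [div_pow, sq_sqrt hdk.le, div_lt_iff₀ hdk, mul_comm, axisRatioDefect_sq hk hu]
  linarith

lemma sq_div_eq_one_sub_axisRatioDefect_div {d k u : ℝ} (hd : 0 < d) (hk : 0 < k)
    (hu : u ∈ Ioo 0 (k ^ 2 / d ^ 2)) :
    (k * (u + 1) - √(k ^ 2 * (1 - u) ^ 2 + 4 * d ^ 2 * u ^ 2)) ^ 2 / (4 * u * (k ^ 2 - u * d ^ 2)) =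
      (1 - axisRatioDefect d k u) / (1 + axisRatioDefect d k u) := by
  obtain ⟨hu0, hu1⟩ := hu
  have hud : u * d ^ 2 < k ^ 2 := (lt_div_iff₀ (by positivity)).mp hu1
  have hQ : √(k ^ 2 * (1 - u) ^ 2 + 4 * d ^ 2 * u ^ 2) ^ 2 =
      k ^ 2 * (1 - u) ^ 2 + 4 * d ^ 2 * u ^ 2 := sq_sqrt (by positivity)
  have hden : 4 * u * (k ^ 2 - u * d ^ 2) =
      (k * (u + 1)) ^ 2 - √(k ^ 2 * (1 - u) ^ 2 + 4 * d ^ 2 * u ^ 2) ^ 2 := by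
    rw [hQ]; ring
  have hQA : √(k ^ 2 * (1 - u) ^ 2 + 4 * d ^ 2 * u ^ 2) ≠ k * (u + 1) := by
    intro h
    rw [h, sub_self] at hden
    nlinarith [mul_pos hu0 (sub_pos.mpr hud)]
  rw [hden, sq_div_sq_sub_sq_eq_one_sub_div_one_add (by positivity) hQA,
    axisRatioDefect]

theorem stmt_16 (d k : ℝ) (hd : 0 < d) (hk : 0 < k)
    (hO : ℝ → ℝ)
    (hhO : ∀ u, hO u =
      (k * (u + 1) - Real.sqrt (k ^ 2 * (1 - u) ^ 2 + 4 * d ^ 2 * u ^ 2)) ^ 2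
        / (4 * u * (k ^ 2 - u * d ^ 2))) :
    k ^ 2 / (k ^ 2 + 2 * d ^ 2) ∈ Set.Ioo (0 : ℝ) (k ^ 2 / d ^ 2) ∧
    (∀ u ∈ Set.Ioo (0 : ℝ) (k ^ 2 / d ^ 2), u ≠ k ^ 2 / (k ^ 2 + 2 * d ^ 2) →
      hO u < hO (k ^ 2 / (k ^ 2 + 2 * d ^ 2))) ∧
    1 - hO (k ^ 2 / (k ^ 2 + 2 * d ^ 2)) = 2 * d * (Real.sqrt (d ^ 2 + k ^ 2) - d) / k ^ 2 := by
  have hmem : k ^ 2 / (k ^ 2 + 2 * d ^ 2) ∈ Ioo (0 : ℝ) (k ^ 2 / d ^ 2) :=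
    ⟨by positivity, div_lt_div_of_pos_left (by positivity) (by positivity)
      (by linarith [pow_pos hk 2, pow_pos hd 2])⟩
  have hOpt : hO (k ^ 2 / (k ^ 2 + 2 * d ^ 2)) =
      (1 - d / √(d ^ 2 + k ^ 2)) / (1 + d / √(d ^ 2 + k ^ 2)) := by
    rw [hhO, sq_div_eq_one_sub_axisRatioDefect_div hd hk hmem, axisRatioDefect_optimal hd hk]
  refine ⟨hmem, fun u hu hne => ?_, by rw [hOpt, one_sub_one_sub_div_one_add_div_sqrt hd hk]⟩
  have hr0 : -1 < d / √(d ^ 2 + k ^ 2) := by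
    linarith [div_nonneg hd.le (sqrt_nonneg (d ^ 2 + k ^ 2))]
  rw [hOpt, hhO, sq_div_eq_one_sub_axisRatioDefect_div hd hk hu]
  have hr : -1 < axisRatioDefect d k u := by linarith [axisRatioDefect_nonneg (d := d) hk hu.1]
  exact strictAntiOn_one_sub_div_one_add hr0 hr (div_sqrt_lt_axisRatioDefect hk hu.1 hne)
end

section
/- Let d, k, l > 0 with l² > d² + k², and set G = (d+l)² + k², H = (d−l)² + k², I = l² − d² − k² (> 0). Then the equality 2d(√(d² + k²) − d)/k² = I·(√(G·H) − I)/(2k²l²) holds if and only if k² + d² + 2dl − l² = 0, equivalently if and only if (l+d)² + k² = 2l². (The left-hand side is 1 − b²/a² for the unique minimal-eccentricity ellipse circumscribed about the parallelogram D with vertices O=(0,0), P=(l,0), Q=(d,k), R=(l+d,k), and the right-hand side is 1 − b²/a² for the unique minimal-eccentricity ellipse inscribed in D; so this says D is bielliptic if and only if the square of the length of the diagonal OR equals twice the square of the length of the side OP.) -/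
/-!
Writing `s = √(d² + k²)` and `t = √(G H) = √(I² + (2kl)²)` and rationalising both numerators,
the two eccentricity expressions become `2d / (s + d)` and `2I / (t + I)`. Their equality is
therefore `d t = I s`, and squaring reduces this to `I² = (2dl)²`, i.e. `I = 2dl`, which is
the stated quadratic condition.
-/

open Real

lemma sqrt_sq_add_sq_sub_div_sq (a : ℝ) {b : ℝ} (hb : b ≠ 0) :
    (√(a ^ 2 + b ^ 2) - a) / b ^ 2 = (√(a ^ 2 + b ^ 2) + a)⁻¹ := by
  have hb2 : 0 < b ^ 2 := by positivity
  have habs : |a| < √(a ^ 2 + b ^ 2) := by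
    rw [← sqrt_sq_eq_abs]
    exact sqrt_lt_sqrt (sq_nonneg a) (by linarith)
  have hpos : 0 < √(a ^ 2 + b ^ 2) + a := by linarith [neg_abs_le a]
  have hsq : √(a ^ 2 + b ^ 2) ^ 2 = a ^ 2 + b ^ 2 := sq_sqrt (by positivity)
  field_simp
  linear_combination hsq

lemma mul_sqrt_eq_mul_sqrt_iff {x y k m : ℝ} (hx : 0 ≤ x) (hy : 0 ≤ y) (hk : k ≠ 0)
    (hm : 0 ≤ m) :
    x * √(y ^ 2 + (k * m) ^ 2) = y * √(x ^ 2 + k ^ 2) ↔ y = x * m := by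
  have hk2 : k ^ 2 ≠ 0 := pow_ne_zero 2 hk
  rw [← sqrt_sq hx, ← sqrt_sq hy, ← sqrt_mul (sq_nonneg x), ← sqrt_mul (sq_nonneg y),
    sqrt_inj (by positivity) (by positivity), sqrt_sq hx, sqrt_sq hy,
    ← pow_left_inj₀ hy (by positivity) two_ne_zero]
  constructor
  · intro h
    exact (mul_left_cancel₀ hk2 (by linear_combination h)).symm
  · intro h
    linear_combination (-k ^ 2) * h

theorem stmt_17 (d k l : ℝ) (hd : 0 < d) (hk : 0 < k) (hl : 0 < l)
    (hlt : d ^ 2 + k ^ 2 < l ^ 2)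
    (G H I : ℝ)
    (hG : G = (d + l) ^ 2 + k ^ 2) (hH : H = (d - l) ^ 2 + k ^ 2)
    (hI : I = l ^ 2 - d ^ 2 - k ^ 2) :
    (2 * d * (Real.sqrt (d ^ 2 + k ^ 2) - d) / k ^ 2 =
        I * (Real.sqrt (G * H) - I) / (2 * k ^ 2 * l ^ 2) ↔
      k ^ 2 + d ^ 2 + 2 * d * l - l ^ 2 = 0) ∧
    (k ^ 2 + d ^ 2 + 2 * d * l - l ^ 2 = 0 ↔ (l + d) ^ 2 + k ^ 2 = 2 * l ^ 2) := by
  have hI0 : 0 < I := by rw [hI]; linarith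
  have hGH : G * H = I ^ 2 + (k * (2 * l)) ^ 2 := by subst hG hH hI; ring
  have hlhs : 2 * d * (√(d ^ 2 + k ^ 2) - d) / k ^ 2 = 2 * d / (√(d ^ 2 + k ^ 2) + d) := by
    rw [mul_div_assoc, sqrt_sq_add_sq_sub_div_sq d hk.ne', div_eq_mul_inv]
  have hrhs : I * (√(G * H) - I) / (2 * k ^ 2 * l ^ 2) = 2 * I / (√(G * H) + I) := by
    rw [hGH, div_eq_mul_inv (2 * I), ← sqrt_sq_add_sq_sub_div_sq I (by positivity)]
    field_simp
  refine ⟨?_, by constructor <;> intro h <;> linear_combination h⟩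
  calc _ ↔ d * √(I ^ 2 + (k * (2 * l)) ^ 2) = I * √(d ^ 2 + k ^ 2) := by
        rw [hlhs, hrhs, div_eq_div_iff (by positivity) (by positivity), hGH]
        constructor <;> intro h <;> linarith
    _ ↔ I = d * (2 * l) := mul_sqrt_eq_mul_sqrt_iff hd.le hI0.le hk.ne' (by positivity)
    _ ↔ _ := by rw [hI]; constructor <;> intro h <;> linarith
end

section
/- Let d, k, l > 0 with l² < d² + k², and set G = (d+l)² + k², H = (d−l)² + k², and |I| = d² + k² − l² (> 0). Then the equality 2d(√(d² + k²) − d)/k² = |I|·(√(G·H) − |I|)/(2k²l²) holds if and only if k² + d² − 2dl − l² = 0, equivalently if and only if (l+d)² + k² = 2(d² + k²). (The left-hand side is 1 − b²/a² for the unique minimal-eccentricity ellipse circumscribed about the parallelogram D with vertices O=(0,0), P=(l,0), Q=(d,k), R=(l+d,k), and the right-hand side is 1 − b²/a² for the unique minimal-eccentricity ellipse inscribed in D; so this says D is bielliptic if and only if the square of the length of the diagonal OR equals twice the square of the length of the side OQ.) -/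
lemma stmt_18_aux (d k l s t absI : ℝ) (hd : 0 < d) (hk : 0 < k) (hl : 0 < l)
    (hlt : l ^ 2 < d ^ 2 + k ^ 2)
    (hI : absI = d ^ 2 + k ^ 2 - l ^ 2)
    (hs2 : s ^ 2 = d ^ 2 + k ^ 2) (hs0 : 0 ≤ s)
    (ht2 : t ^ 2 = absI ^ 2 + 4 * k ^ 2 * l ^ 2) (ht0 : 0 ≤ t) :
    2 * d * (s - d) / k ^ 2 = absI * (t - absI) / (2 * k ^ 2 * l ^ 2) ↔
      k ^ 2 + d ^ 2 - 2 * d * l - l ^ 2 = 0 := by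
  have hsd : d < s := by nlinarith [sq_nonneg (s - d), sq_nonneg (s + d)]
  have hsd' : 0 < s - d := by linarith
  have hIpos : 0 < absI := by rw [hI]; linarith
  have hk2 : k ^ 2 = (s - d) * (s + d) := by nlinarith
  constructor
  · intro h
    rw [div_eq_div_iff (by positivity) (by positivity)] at h
    have h'' : absI * t * k ^ 2 =
        (4 * d * l ^ 2 * (s - d) + absI ^ 2) * k ^ 2 := by
      linear_combination -h
    have h' : absI * t = 4 * d * l ^ 2 * (s - d) + absI ^ 2 :=
      mul_right_cancel₀ (by positivity) h''
    have hsqd : absI ^ 2 * t ^ 2 = (4 * d * l ^ 2 * (s - d) + absI ^ 2) ^ 2 := by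
      rw [← h']; ring
    rw [ht2] at hsqd
    have key : 4 * l ^ 2 * (s - d) ^ 2 * (absI - 2 * d * l) * (absI + 2 * d * l) = 0 := by
      linear_combination hsqd - 4 * l ^ 2 * absI ^ 2 * hk2
    have h1 : absI - 2 * d * l = 0 := by
      rcases mul_eq_zero.mp key with h2 | h2
      · rcases mul_eq_zero.mp h2 with h3 | h3
        · exfalso; nlinarith [pow_pos hsd' 2, mul_pos hl hl]
        · exact h3
      · exfalso; nlinarith [mul_pos hd hl]
    rw [hI] at h1; linarith
  · intro h
    have hI2 : absI = 2 * d * l := by rw [hI]; linarith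
    have ht : t = 2 * l * s := by
      have htt : t ^ 2 = (2 * l * s) ^ 2 := by
        rw [ht2, hI2]; linear_combination (-4 * l ^ 2) * hs2
      nlinarith [mul_nonneg hl.le hs0]
    rw [ht, hI2, div_eq_div_iff (by positivity) (by positivity)]
    ring

theorem stmt_18 (d k l : ℝ) (hd : 0 < d) (hk : 0 < k) (hl : 0 < l)
    (hlt : l ^ 2 < d ^ 2 + k ^ 2)
    (G H absI : ℝ)
    (hG : G = (d + l) ^ 2 + k ^ 2) (hH : H = (d - l) ^ 2 + k ^ 2)
    (hI : absI = d ^ 2 + k ^ 2 - l ^ 2) :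
    (2 * d * (Real.sqrt (d ^ 2 + k ^ 2) - d) / k ^ 2 =
        absI * (Real.sqrt (G * H) - absI) / (2 * k ^ 2 * l ^ 2) ↔
      k ^ 2 + d ^ 2 - 2 * d * l - l ^ 2 = 0) ∧
    (k ^ 2 + d ^ 2 - 2 * d * l - l ^ 2 = 0 ↔
      (l + d) ^ 2 + k ^ 2 = 2 * (d ^ 2 + k ^ 2)) := by
  have hGH : G * H = absI ^ 2 + 4 * k ^ 2 * l ^ 2 := by
    rw [hG, hH, hI]; ring
  constructor
  · exact stmt_18_aux d k l _ _ absI hd hk hl hlt hI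
      (Real.sq_sqrt (by positivity)) (Real.sqrt_nonneg _)
      (by rw [Real.sq_sqrt (by rw [hGH]; positivity)]; exact hGH) (Real.sqrt_nonneg _)
  · constructor <;> intro h <;> linear_combination -h
end
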